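/- arXiv:math/0311112 — 5 statements merged into one kernel-verified Lean document; each statement's English description precedes it below -/
import Mathlib

section
/- For a finite lattice L the following conditions are equivalent: (i) L is meet-distributive; (ii) L is graded and deg 1̂ = rank 1̂; (iii) L is graded and deg p = rank p for all p ∈ L. -/
/-- An element `p` is *join-irreducible* if it is not the least upper bound of the set of
elements strictly smaller than it (this excludes the minimal element `0̂`). -/
def JoinIrred {L : Type*} [Preorder L] (p : L) : Prop := ¬ IsLUB {q | q < p} p

/-- The *degree* of `p` is the number of join-irreducible elements `q` with `q ≤ p`,
i.e. the cardinality of `ℓ(p)`. -/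
noncomputable def degL {L : Type*} [Preorder L] (p : L) : ℕ :=
  Nat.card {q : L // JoinIrred q ∧ q ≤ p}

/-- The interval `[x,y]` is a Boolean lattice (of some rank `n`). -/
def IsBooleanInterval {L : Type*} [Preorder L] (x y : L) : Prop :=
  ∃ n : ℕ, Nonempty ((Set.Icc x y) ≃o Set (Fin n))

/-- A meet-semilattice is *meet-distributive* if each interval `[x,y]` such that `x` is the
meet of the lower neighbors of `y` in this interval is Boolean. -/
def MeetDistributive (L : Type*) [SemilatticeInf L] : Prop :=
  ∀ x y : L, x ≤ y → IsGLB {z | x ≤ z ∧ z ⋖ y} x → IsBooleanInterval x y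

/-- `L` is *graded* if for each element all maximal chains descending from that element
(i.e. chains of covering relations starting at a minimal element) have the same length. -/
def IsGradedPoset (L : Type*) [Preorder L] : Prop :=
  ∀ c d : RelSeries {ab : L × L | ab.1 ⋖ ab.2},
    IsMin c.head → IsMin d.head → c.last = d.last → c.length = d.length

section Aux

variable {L : Type*} [Fintype L] [Lattice L] [BoundedOrder L]
set_option linter.unusedSectionVars false

/-- the set of join-irreducibles below `p` -/
def ellSet {L : Type*} [Preorder L] (p : L) : Set L := {q | JoinIrred q ∧ q ≤ p}

lemma mem_ellSet {p q : L} : q ∈ ellSet p ↔ JoinIrred q ∧ q ≤ p := Iff.rfl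

lemma degL_eq_ncard (p : L) : degL p = (ellSet p).ncard := by
  rw [← Nat.card_coe_set_eq]
  rfl

lemma not_joinIrred_bot : ¬ JoinIrred (⊥ : L) := by
  intro h
  apply h
  constructor
  · intro q hq
    exact absurd hq (not_lt_bot)
  · intro b _
    exact bot_le

lemma isLUB_ellSet (p : L) : IsLUB (ellSet p) p := by
  induction p using WellFoundedLT.induction with
  | ind p ih =>
    constructor
    · intro q hq; exact hq.2
    · intro b hb
      by_cases hp : JoinIrred p
      · exact hb ⟨hp, le_rfl⟩
      · rw [JoinIrred, not_not] at hp
        apply hp.2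
        intro r hr
        exact (ih r hr).2 (fun q hq => hb ⟨hq.1, hq.2.trans hr.le⟩)

lemma ellSet_subset_iff {p r : L} : ellSet p ⊆ ellSet r ↔ p ≤ r := by
  constructor
  · intro h
    exact (isLUB_ellSet p).2 (fun q hq => (h hq).2)
  · intro h q hq
    exact ⟨hq.1, hq.2.trans h⟩

lemma ellSet_inj {p r : L} (h : ellSet p = ellSet r) : p = r :=
  le_antisymm (ellSet_subset_iff.1 h.le) (ellSet_subset_iff.1 h.ge)

lemma ellSet_ssubset {p r : L} (h : p < r) : ellSet p ⊂ ellSet r := by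
  refine ⟨ellSet_subset_iff.2 h.le, fun hc => ?_⟩
  exact absurd (ellSet_inj (le_antisymm (ellSet_subset_iff.2 h.le) hc)) h.ne

lemma degL_lt_degL {p r : L} (h : p < r) : degL p < degL r := by
  rw [degL_eq_ncard, degL_eq_ncard]
  exact Set.ncard_lt_ncard (ellSet_ssubset h) (Set.toFinite _)

lemma degL_bot : degL (⊥ : L) = 0 := by
  rw [degL_eq_ncard]
  convert Set.ncard_empty L
  ext q
  simp only [mem_ellSet, Set.mem_empty_iff_false, iff_false, not_and, le_bot_iff]
  rintro h rfl
  exact not_joinIrred_bot h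

lemma length_le_degL (c : LTSeries L) : c.length + degL c.head ≤ degL c.last := by
  have key : ∀ k (h : k < c.length + 1), k + degL c.head ≤ degL (c.toFun ⟨k, h⟩) := by
    intro k
    induction k with
    | zero =>
      intro h
      have : c.toFun ⟨0, h⟩ = c.head := by
        congr 1
      rw [this]; omega
    | succ k ihk =>
      intro h
      have h1 : k < c.length + 1 := by omega
      have h2 : degL (c.toFun ⟨k, h1⟩) < degL (c.toFun ⟨k + 1, h⟩) :=
        degL_lt_degL (c.strictMono (by simp [Fin.lt_def]))
      have := ihk h1
      omega
  exact key c.length (by omega)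

lemma height_le_degL (p : L) : Order.height p ≤ (degL p : ℕ∞) := by
  apply Order.height_le
  intro c hc
  have h1 := length_le_degL c
  rw [hc] at h1
  exact_mod_cast Nat.cast_le.mpr (by omega : c.length ≤ degL p)

lemma height_ne_top (p : L) : Order.height p ≠ ⊤ :=
  fun h => by simpa [h] using height_le_degL p

end Aux

section Graded

variable {L : Type*} [Fintype L] [Lattice L] [BoundedOrder L]
set_option linter.unusedSectionVars false

/-- abbreviation for cover series -/
abbrev CovSeries (L : Type*) [Preorder L] := RelSeries {ab : L × L | ab.1 ⋖ ab.2}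

lemma exists_cover_chain : ∀ (n : ℕ) (p : L), Order.height p = (n : ℕ∞) →
    ∃ c : CovSeries L, c.head = ⊥ ∧ c.last = p ∧ c.length = n := by
  intro n
  induction n with
  | zero =>
    intro p hp
    have hmin : IsMin p := Order.height_eq_zero.mp (by exact_mod_cast hp)
    exact ⟨RelSeries.singleton _ p, by simp [hmin.eq_bot], by simp, rfl⟩
  | succ n ihn =>
    intro p hp
    obtain ⟨c, hlast, hlen⟩ := Order.exists_series_of_height_eq_coe p hp
    have hne : c.length ≠ 0 := by omega
    have hw : c.eraseLast.last < p := by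
      have := c.eraseLast_last_rel_last hne
      rwa [hlast] at this
    obtain ⟨z, hwz, hzp⟩ := hw.exists_le_covby
    have hzfin : Order.height z ≠ ⊤ := height_ne_top z
    have hzn : Order.height z = (n : ℕ∞) := by
      have hge : (n : ℕ∞) ≤ Order.height z := by
        have h1 : (c.eraseLast.length : ℕ∞) ≤ Order.height z :=
          Order.length_le_height (p := c.eraseLast) hwz
        simpa [RelSeries.eraseLast_length, hlen] using h1
      have hlt : Order.height z < Order.height p :=
        Order.height_strictMono hzp.lt (lt_of_le_of_ne le_top hzfin)
      rw [hp] at hlt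
      lift Order.height z to ℕ using hzfin with m hm
      have h2 : m < n + 1 := by exact_mod_cast hlt
      have h3 : n ≤ m := by exact_mod_cast hge
      exact_mod_cast (show m = n by omega)
    obtain ⟨d, hd1, hd2, hd3⟩ := ihn z hzn
    refine ⟨d.snoc p (hd2 ▸ hzp), by simpa using hd1, by simp, by simp [hd3]⟩

/-- the natural-number height -/
noncomputable def hnat (p : L) : ℕ := (Order.height p).toNat

lemma coe_hnat (p : L) : (hnat p : ℕ∞) = Order.height p :=
  ENat.coe_toNat (height_ne_top p)

lemma exists_cover_chain' (p : L) :
    ∃ c : CovSeries L, c.head = ⊥ ∧ c.last = p ∧ c.length = hnat p :=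
  exists_cover_chain (hnat p) p (coe_hnat p).symm

lemma hnat_le_degL (p : L) : hnat p ≤ degL p := by
  have := height_le_degL p
  rw [← coe_hnat p] at this
  exact_mod_cast this

/-- Given uniform increments of `degL` along covers, the degree of the last element
of a cover series is its length plus the degree of the head. -/
lemma covSeries_degL (hcov : ∀ z y : L, z ⋖ y → degL y = degL z + 1) (c : CovSeries L) :
    degL c.last = c.length + degL c.head := by
  have key : ∀ k (h : k < c.length + 1), degL (c.toFun ⟨k, h⟩) = k + degL c.head := by
    intro k
    induction k with
    | zero =>
      intro h
      have : c.toFun ⟨0, h⟩ = c.head := by congr 1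
      rw [this]; omega
    | succ k ihk =>
      intro h
      have h1 : k < c.length + 1 := by omega
      have hk : k < c.length := by omega
      have hstep := c.step ⟨k, hk⟩
      have h2 : degL (c.toFun ⟨k + 1, h⟩) = degL (c.toFun ⟨k, h1⟩) + 1 := by
        have : c.toFun (⟨k, hk⟩ : Fin c.length).castSucc = c.toFun ⟨k, h1⟩ := by congr 1
        have h' : c.toFun (⟨k, hk⟩ : Fin c.length).succ = c.toFun ⟨k + 1, h⟩ := by congr 1
        rw [← this, ← h']
        exact hcov _ _ hstep
      rw [h2, ihk h1]; omega
  exact key c.length (by omega)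

lemma graded_of_hcov (hcov : ∀ z y : L, z ⋖ y → degL y = degL z + 1) : IsGradedPoset L := by
  intro c d hc hd hlast
  have h1 := covSeries_degL hcov c
  have h2 := covSeries_degL hcov d
  rw [hc.eq_bot, degL_bot] at h1
  rw [hd.eq_bot, degL_bot] at h2
  rw [hlast] at h1
  omega

lemma degL_eq_hnat_of_hcov (hcov : ∀ z y : L, z ⋖ y → degL y = degL z + 1) (p : L) :
    degL p = hnat p := by
  obtain ⟨c, h1, h2, h3⟩ := exists_cover_chain' p
  have := covSeries_degL hcov c
  rw [h1, h2, h3, degL_bot] at this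
  omega

lemma hnat_cov_of_graded (hg : IsGradedPoset L) {z y : L} (hzy : z ⋖ y) :
    hnat y = hnat z + 1 := by
  obtain ⟨c, hc1, hc2, hc3⟩ := exists_cover_chain' z
  obtain ⟨d, hd1, hd2, hd3⟩ := exists_cover_chain' y
  have hcc : (c.snoc y (hc2 ▸ hzy)).length = d.length := by
    apply hg
    · rw [RelSeries.head_snoc, hc1]; exact isMin_bot
    · exact hd1 ▸ isMin_bot
    · simp [hd2]
  simp only [RelSeries.snoc_length] at hcc
  omega

lemma hcov_of_graded_top (hg : IsGradedPoset L) (htop : degL (⊤ : L) = hnat (⊤ : L)) :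
    ∀ z y : L, z ⋖ y → degL y = degL z + 1 := by
  have key : ∀ p : L, degL p + hnat (⊤ : L) ≤ degL (⊤ : L) + hnat p := by
    intro p
    induction p using WellFoundedGT.induction with
    | ind p ih =>
      by_cases hp : p = ⊤
      · subst hp; omega
      · obtain ⟨u, hpu, _⟩ := (lt_top_iff_ne_top.mpr hp).exists_covby_le
        have h1 := ih u hpu.lt
        have h2 : hnat u = hnat p + 1 := hnat_cov_of_graded hg hpu
        have h3 : degL p < degL u := degL_lt_degL hpu.lt
        omega
  have hdh : ∀ p : L, degL p = hnat p := by
    intro p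
    have h1 := key p
    have h2 := hnat_le_degL p
    omega
  intro z y hzy
  rw [hdh z, hdh y, hnat_cov_of_graded hg hzy]

end Graded

section MDConstruction

variable {L : Type*} [Fintype L] [Lattice L] [BoundedOrder L]
set_option linter.unusedSectionVars false

lemma diff_singleton_of_hcov (hcov : ∀ z y : L, z ⋖ y → degL y = degL z + 1)
    {z y : L} (hzy : z ⋖ y) : ∃ g, ellSet y \ ellSet z = {g} := by
  have hsub : ellSet z ⊆ ellSet y := ellSet_subset_iff.2 hzy.le
  have hc : (ellSet y \ ellSet z).ncard = 1 := by
    rw [Set.ncard_diff hsub (Set.toFinite _), ← degL_eq_ncard, ← degL_eq_ncard, hcov z y hzy]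
    omega
  exact Set.ncard_eq_one.mp hc

lemma md_of_hcov (hcov : ∀ z y : L, z ⋖ y → degL y = degL z + 1) : MeetDistributive L := by
  classical
  intro x y hxy hglb
  have hsing : ∀ z : L, ∃ g : L, z ⋖ y → ellSet y \ ellSet z = {g} := by
    intro z
    by_cases hz : z ⋖ y
    · obtain ⟨g, hg⟩ := diff_singleton_of_hcov hcov hz
      exact ⟨g, fun _ => hg⟩
    · exact ⟨⊥, fun h => absurd h hz⟩
  choose q hq using hsing
  set Q : Set L := ellSet y \ ellSet x with hQdef
  have hqQ : ∀ z : L, x ≤ z → z ⋖ y → q z ∈ Q := by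
    intro z hxz hz
    have h1 : q z ∈ ellSet y \ ellSet z := by rw [hq z hz]; rfl
    exact ⟨h1.1, fun hxmem => h1.2 (ellSet_subset_iff.2 hxz hxmem)⟩
  have hQsurj : ∀ g ∈ Q, ∃ z, (x ≤ z ∧ z ⋖ y) ∧ q z = g := by
    intro g hg
    have hgx : ¬ g ≤ x := fun h => hg.2 ⟨hg.1.1, h⟩
    obtain ⟨z, hzS, hgz⟩ : ∃ z, (x ≤ z ∧ z ⋖ y) ∧ ¬ g ≤ z := by
      by_contra hc
      push_neg at hc
      exact hgx (hglb.2 (fun z hz => hc z ⟨hz.1, hz.2⟩))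
    have h1 : g ∈ ellSet y \ ellSet z := ⟨hg.1, fun hm => hgz hm.2⟩
    rw [hq z hzS.2] at h1
    exact ⟨z, hzS, h1.symm⟩
  haveI : Fintype ↥Q := Fintype.ofFinite _
  have hcard : Fintype.card ↥Q = Q.ncard := by
    rw [← Nat.card_coe_set_eq, Nat.card_eq_fintype_card]
  let e0 : ↥Q ≃ Fin Q.ncard := Fintype.equivFinOfCardEq hcard
  refine ⟨Q.ncard, ⟨?_⟩⟩
  let f : ↥(Set.Icc x y) → Set (Fin Q.ncard) :=
    fun t => {i | ((e0.symm i : ↥Q) : L) ≤ (t : L)}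
  have hf_le : ∀ s t : ↥(Set.Icc x y), f s ⊆ f t ↔ s ≤ t := by
    intro s t
    constructor
    · intro h
      have hsub : ellSet (s : L) ⊆ ellSet (t : L) := by
        intro r hr
        by_cases hrx : r ≤ x
        · exact ⟨hr.1, hrx.trans t.2.1⟩
        · have hrQ : r ∈ Q := ⟨⟨hr.1, hr.2.trans s.2.2⟩, fun hm => hrx hm.2⟩
          have hi : e0 (e0.symm (e0 ⟨r, hrQ⟩)) ∈ f s := by
            rw [Equiv.apply_symm_apply]
            show ((e0.symm (e0 ⟨r, hrQ⟩) : ↥Q) : L) ≤ (s : L)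
            rw [Equiv.symm_apply_apply]
            exact hr.2
          have h2 := h hi
          have h3 : ((e0.symm (e0 (e0.symm (e0 ⟨r, hrQ⟩))) : ↥Q) : L) ≤ (t : L) := h2
          rw [Equiv.symm_apply_apply, Equiv.symm_apply_apply] at h3
          exact ⟨hr.1, h3⟩
      exact Subtype.coe_le_coe.1 (ellSet_subset_iff.1 hsub)
    · intro h i hi
      exact le_trans hi (Subtype.coe_le_coe.2 h)
  have hsurj : ∀ A : Set (Fin Q.ncard), ∃ t : ↥(Set.Icc x y), f t = A := by
    intro A
    set A' : Set L := {g : L | ∃ h : g ∈ Q, e0 ⟨g, h⟩ ∈ A} with hA'def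
    have hA'Q : A' ⊆ Q := fun g hg => hg.1
    set F : Finset L := Finset.univ.filter (fun z => (x ≤ z ∧ z ⋖ y) ∧ q z ∉ A') with hFdef
    set t : L := y ⊓ F.inf id with htdef
    have hxt : x ≤ t :=
      le_inf hxy (Finset.le_inf (fun z hz => (Finset.mem_filter.1 hz).2.1.1))
    have htmem : t ∈ Set.Icc x y := ⟨hxt, inf_le_left⟩
    have hmemt : ∀ r : L, r ≤ t ↔ r ≤ y ∧ ∀ z ∈ F, r ≤ z := by
      intro r
      rw [htdef, le_inf_iff, Finset.le_inf_iff]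
      exact Iff.rfl
    have hellt : ellSet t = ellSet x ∪ A' := by
      ext r
      simp only [mem_ellSet, Set.mem_union]
      constructor
      · rintro ⟨hJI, hrt⟩
        obtain ⟨hry, hrF⟩ := (hmemt r).1 hrt
        by_cases hrx : r ≤ x
        · exact Or.inl ⟨hJI, hrx⟩
        by_cases hrA : r ∈ A'
        · exact Or.inr hrA
        · exfalso
          have hrQ : r ∈ Q := ⟨⟨hJI, hry⟩, fun hm => hrx hm.2⟩
          obtain ⟨z, hzS, hqz⟩ := hQsurj r hrQ
          have hzF : z ∈ F := Finset.mem_filter.2 ⟨Finset.mem_univ _, hzS, by rw [hqz]; exact hrA⟩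
          have hnle : ¬ r ≤ z := by
            have h1 : r ∈ ellSet y \ ellSet z := by rw [hq z hzS.2, ← hqz]; rfl
            exact fun hle => h1.2 ⟨hJI, hle⟩
          exact hnle (hrF z hzF)
      · rintro (⟨hJI, hrx⟩ | hrA)
        · exact ⟨hJI, hrx.trans hxt⟩
        · have hrQ : r ∈ Q := hA'Q hrA
          refine ⟨hrQ.1.1, (hmemt r).2 ⟨hrQ.1.2, ?_⟩⟩
          intro z hzF
          obtain ⟨_, hzS, hqzA⟩ := Finset.mem_filter.1 hzF
          by_contra hrz
          have h1 : r ∈ ellSet y \ ellSet z := ⟨hrQ.1, fun hm => hrz hm.2⟩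
          rw [hq z hzS.2, Set.mem_singleton_iff] at h1
          exact hqzA (h1 ▸ hrA)
    refine ⟨⟨t, htmem⟩, ?_⟩
    ext i
    simp only [f, Set.mem_setOf_eq]
    have hgQ : ((e0.symm i : ↥Q) : L) ∈ Q := (e0.symm i).2
    constructor
    · intro hgt
      have hmem : ((e0.symm i : ↥Q) : L) ∈ ellSet t := ⟨hgQ.1.1, hgt⟩
      rw [hellt] at hmem
      rcases hmem with h | h
      · exact absurd h hgQ.2
      · obtain ⟨hmemQ, hiA⟩ := h
        have heq : (⟨((e0.symm i : ↥Q) : L), hmemQ⟩ : ↥Q) = e0.symm i := Subtype.ext rfl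
        rw [heq, Equiv.apply_symm_apply] at hiA
        exact hiA
    · intro hiA
      have hA' : ((e0.symm i : ↥Q) : L) ∈ A' := by
        refine ⟨hgQ, ?_⟩
        have heq : (⟨((e0.symm i : ↥Q) : L), hgQ⟩ : ↥Q) = e0.symm i := Subtype.ext rfl
        rw [heq, Equiv.apply_symm_apply]
        exact hiA
      have : ((e0.symm i : ↥Q) : L) ∈ ellSet t := by
        rw [hellt]; exact Or.inr hA'
      exact this.2
  have hinj : Function.Injective f := by
    intro s t hst
    exact le_antisymm ((hf_le s t).1 hst.subset) ((hf_le t s).1 hst.symm.subset)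
  exact
    { toEquiv := Equiv.ofBijective f ⟨hinj, fun A => hsurj A⟩
      map_rel_iff' := fun {a b} => hf_le a b }

end MDConstruction

section MDtoHcov

lemma set_covby_univ_iff {α : Type*} {s : Set α} : s ⋖ Set.univ ↔ ∃ i, s = {i}ᶜ := by
  constructor
  · intro h
    obtain ⟨a, ha, hins⟩ := Set.covBy_iff_exists_insert.1 h
    refine ⟨a, ?_⟩
    ext x
    simp only [Set.mem_compl_iff, Set.mem_singleton_iff]
    constructor
    · intro hx hxa; exact ha (hxa ▸ hx)
    · intro hxa
      have : x ∈ insert a s := hins ▸ Set.mem_univ x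
      rcases this with h' | h'
      · exact absurd h' hxa
      · exact h'
  · rintro ⟨i, rfl⟩
    have h1 : ({i}ᶜ : Set α) ⋖ insert i ({i}ᶜ : Set α) := Set.covBy_insert (by simp)
    have h2 : insert i ({i}ᶜ : Set α) = Set.univ := by
      ext x; by_cases hx : x = i <;> simp [hx]
    rwa [h2] at h1

lemma set_empty_covby_singleton {α : Type*} (i : α) : (∅ : Set α) ⋖ {i} := by
  have h1 : (∅ : Set α) ⋖ insert i (∅ : Set α) := Set.covBy_insert (by simp)
  simpa using h1

variable {L : Type*} [Fintype L] [Lattice L] [BoundedOrder L]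
set_option linter.unusedSectionVars false

lemma joinIrred_unique_cover {y z z' : L} (hJI : JoinIrred y) (hz : z ⋖ y) (hz' : z' ⋖ y) :
    z = z' := by
  by_contra hne
  have hzz' : z < z ⊔ z' := by
    rcases lt_or_eq_of_le (le_sup_left : z ≤ z ⊔ z') with h | h
    · exact h
    · exfalso
      have hle : z' ≤ z := le_sup_right.trans h.symm.le
      rcases lt_or_eq_of_le hle with h' | h'
      · exact hz'.2 h' hz.lt
      · exact hne h'.symm
  have hsup : z ⊔ z' = y := by
    have hle : z ⊔ z' ≤ y := sup_le hz.le hz'.le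
    rcases lt_or_eq_of_le hle with h | h
    · exact absurd h (hz.2 hzz')
    · exact h
  apply hJI
  constructor
  · intro r hr; exact hr.le
  · intro b hb
    have h1 : z ≤ b := hb hz.lt
    have h2 : z' ≤ b := hb hz'.lt
    calc y = z ⊔ z' := hsup.symm
      _ ≤ b := sup_le h1 h2
  
lemma two_covers_of_not_joinIrred {y z : L} (hny : ¬ JoinIrred y) (hz : z ⋖ y) :
    ∃ z₁ z₂ : L, z₁ ⋖ y ∧ z₂ ⋖ y ∧ z₁ ≠ z₂ := by
  by_contra hc
  push_neg at hc
  apply hny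
  intro hlub
  have hub : z ∈ upperBounds {r | r < y} := by
    intro r hr
    obtain ⟨w, hrw, hwy⟩ := hr.exists_le_covby
    exact hrw.trans (hc w z hwy hz).le
  exact absurd (hlub.2 hub) (not_le_of_gt hz.lt)

lemma sing_of_md (hmd : MeetDistributive L) :
    ∀ y z : L, z ⋖ y → ∃ g, ellSet y \ ellSet z = {g} := by
  classical
  intro y
  induction y using WellFoundedLT.induction with
  | ind y ih =>
    intro z hzy
    by_cases hJI : JoinIrred y
    · refine ⟨y, ?_⟩
      ext r
      simp only [Set.mem_diff, mem_ellSet, Set.mem_singleton_iff]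
      constructor
      · rintro ⟨⟨hJI', hry⟩, hrz⟩
        have hrzle : ¬ r ≤ z := fun h => hrz ⟨hJI', h⟩
        by_contra hrny
        have hrlty : r < y := lt_of_le_of_ne hry hrny
        obtain ⟨w, hrw, hwy⟩ := hrlty.exists_le_covby
        exact hrzle (hrw.trans (joinIrred_unique_cover hJI hwy hzy).le)
      · rintro rfl
        exact ⟨⟨hJI, le_rfl⟩, fun hm => absurd hm.2 (not_le_of_gt hzy.lt)⟩
    · obtain ⟨z₁, z₂, h1, h2, h12⟩ := two_covers_of_not_joinIrred hJI hzy
      set Cov : Finset L := Finset.univ.filter (fun w => w ⋖ y) with hCov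
      set x : L := Cov.inf id with hx
      have hxw : ∀ w, w ⋖ y → x ≤ w := by
        intro w hw
        exact Finset.inf_le (by simp [hCov, hw])
      have hxy : x ≤ y := (hxw z hzy).trans hzy.le
      have hglb : IsGLB {w | x ≤ w ∧ w ⋖ y} x := by
        constructor
        · rintro w ⟨_, hw⟩
          exact hxw w hw
        · intro b hb
          apply Finset.le_inf
          intro w hw
          have hwc : w ⋖ y := (Finset.mem_filter.1 hw).2
          exact hb ⟨hxw w hwc, hwc⟩
      obtain ⟨m, ⟨e⟩⟩ := hmd x y hxy hglb
      have hymem : y ∈ Set.Icc x y := ⟨hxy, le_rfl⟩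
      have hxmem : x ∈ Set.Icc x y := ⟨le_rfl, hxy⟩
      have hmemIcc : ∀ w, w ⋖ y → w ∈ Set.Icc x y := fun w hw => ⟨hxw w hw, hw.le⟩
      have hcovIcc : ∀ a b : ↥(Set.Icc x y), ((a : L) ⋖ (b : L)) ↔ a ⋖ b := by
        intro a b
        have h := Set.OrdConnected.apply_covBy_apply_iff
          (OrderEmbedding.subtype (· ∈ Set.Icc x y))
          (by
            rw [show ⇑(OrderEmbedding.subtype (· ∈ Set.Icc x y)) = (Subtype.val : ↥(Set.Icc x y) → L) from rfl,
              Subtype.range_coe_subtype, Set.setOf_mem_eq]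
            exact Set.ordConnected_Icc) (a := a) (b := b)
        exact h
      have hcovE : ∀ a b : ↥(Set.Icc x y), (e a ⋖ e b) ↔ ((a : L) ⋖ (b : L)) :=
        fun a b => (apply_covBy_apply_iff e).trans (hcovIcc a b).symm
      have he_y : e ⟨y, hymem⟩ = Set.univ := by
        refine le_antisymm (Set.subset_univ _) ?_
        have h1 : e.symm Set.univ ≤ ⟨y, hymem⟩ :=
          Subtype.coe_le_coe.1 (e.symm Set.univ).2.2
        calc Set.univ = e (e.symm Set.univ) := (e.apply_symm_apply _).symm
          _ ⊆ e ⟨y, hymem⟩ := e.monotone h1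
      have he_x : e ⟨x, hxmem⟩ = ∅ := by
        refine le_antisymm ?_ (Set.empty_subset _)
        have h1 : (⟨x, hxmem⟩ : ↥(Set.Icc x y)) ≤ e.symm ∅ :=
          Subtype.coe_le_coe.1 (e.symm ∅).2.1
        calc e ⟨x, hxmem⟩ ⊆ e (e.symm ∅) := e.monotone h1
          _ = ∅ := e.apply_symm_apply _
      set Z : Fin m → L := fun i => ((e.symm ({i}ᶜ) : ↥(Set.Icc x y)) : L) with hZ
      set A : Fin m → L := fun i => ((e.symm ({i}) : ↥(Set.Icc x y)) : L) with hA
      have hZcov : ∀ i, Z i ⋖ y := by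
        intro i
        have h1 : ({i}ᶜ : Set (Fin m)) ⋖ Set.univ := set_covby_univ_iff.2 ⟨i, rfl⟩
        rw [← he_y, ← e.apply_symm_apply ({i}ᶜ : Set (Fin m))] at h1
        exact (hcovE _ _).1 h1
      have hcovZ : ∀ w, w ⋖ y → ∃ i, w = Z i := by
        intro w hw
        have h1 : e ⟨w, hmemIcc w hw⟩ ⋖ e ⟨y, hymem⟩ := (hcovE _ _).2 hw
        rw [he_y] at h1
        obtain ⟨i, hi⟩ := set_covby_univ_iff.1 h1
        refine ⟨i, ?_⟩
        have h2 : (⟨w, hmemIcc w hw⟩ : ↥(Set.Icc x y)) = e.symm ({i}ᶜ) := by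
          rw [← hi, e.symm_apply_apply]
        exact congrArg Subtype.val h2
      have hAcov : ∀ i, x ⋖ A i := by
        intro i
        have h1 : (∅ : Set (Fin m)) ⋖ ({i} : Set (Fin m)) := set_empty_covby_singleton i
        rw [← he_x, ← e.apply_symm_apply ({i} : Set (Fin m))] at h1
        exact (hcovE _ _).1 h1
      obtain ⟨i₁, hi₁⟩ := hcovZ z₁ h1
      obtain ⟨i₂, hi₂⟩ := hcovZ z₂ h2
      have hine : i₁ ≠ i₂ := fun h => h12 (by rw [hi₁, hi₂, h])
      have hsing_ne_univ : ∀ i : Fin m, ({i} : Set (Fin m)) ≠ Set.univ := by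
        intro i h
        have e1 : i₁ ∈ ({i} : Set (Fin m)) := h ▸ Set.mem_univ _
        have e2 : i₂ ∈ ({i} : Set (Fin m)) := h ▸ Set.mem_univ _
        exact hine (e1.trans e2.symm)
      have hAlt : ∀ i, A i < y := by
        intro i
        refine lt_of_le_of_ne (e.symm ({i} : Set (Fin m))).2.2 ?_
        intro h
        apply hsing_ne_univ i
        have h2 : (e.symm ({i} : Set (Fin m))) = ⟨y, hymem⟩ := Subtype.ext h
        rw [← e.apply_symm_apply ({i} : Set (Fin m)), h2, he_y]
      have hpex : ∀ i : Fin m, ∃ g, ellSet (A i) \ ellSet x = {g} :=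
        fun i => ih (A i) (hAlt i) x (hAcov i)
      choose p hp using hpex
      have hpmem : ∀ i, p i ∈ ellSet (A i) \ ellSet x := fun i => by rw [hp i]; rfl
      have hpJI : ∀ i, JoinIrred (p i) := fun i => (hpmem i).1.1
      have hpA : ∀ i, p i ≤ A i := fun i => (hpmem i).1.2
      have hpx : ∀ i, ¬ p i ≤ x := fun i h => (hpmem i).2 ⟨hpJI i, h⟩
      have htrick : ∀ (r : L) (i : Fin m), r ≤ A i → r ≤ Z i → r ≤ x := by
        intro r i h1' h2'
        have hwIcc : x ⊔ r ∈ Set.Icc x y := ⟨le_sup_left, sup_le hxy (h1'.trans (hAlt i).le)⟩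
        have hsubA : e ⟨x ⊔ r, hwIcc⟩ ⊆ ({i} : Set (Fin m)) := by
          have hle : (⟨x ⊔ r, hwIcc⟩ : ↥(Set.Icc x y)) ≤ e.symm ({i} : Set (Fin m)) :=
            Subtype.coe_le_coe.1 (sup_le (e.symm ({i} : Set (Fin m))).2.1 h1')
          calc e ⟨x ⊔ r, hwIcc⟩ ⊆ e (e.symm ({i} : Set (Fin m))) := e.monotone hle
            _ = {i} := e.apply_symm_apply _
        have hsubZ : e ⟨x ⊔ r, hwIcc⟩ ⊆ ({i}ᶜ : Set (Fin m)) := by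
          have hle : (⟨x ⊔ r, hwIcc⟩ : ↥(Set.Icc x y)) ≤ e.symm ({i}ᶜ : Set (Fin m)) :=
            Subtype.coe_le_coe.1 (sup_le (e.symm ({i}ᶜ : Set (Fin m))).2.1 h2')
          calc e ⟨x ⊔ r, hwIcc⟩ ⊆ e (e.symm ({i}ᶜ : Set (Fin m))) := e.monotone hle
            _ = {i}ᶜ := e.apply_symm_apply _
        have hempty : e ⟨x ⊔ r, hwIcc⟩ = ∅ := by
          ext j
          simp only [Set.mem_empty_iff_false, iff_false]
          intro hj
          exact (hsubZ hj) (hsubA hj)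
        have heq : (⟨x ⊔ r, hwIcc⟩ : ↥(Set.Icc x y)) = ⟨x, hxmem⟩ :=
          e.injective (by rw [hempty, he_x])
        have hxr : x ⊔ r = x := congrArg Subtype.val heq
        exact le_sup_right.trans hxr.le
      have hAZ : ∀ i j : Fin m, i ≠ j → A i ≤ Z j := by
        intro i j hij
        have hsub : ({i} : Set (Fin m)) ⊆ ({j}ᶜ : Set (Fin m)) := by
          intro u hu
          simp only [Set.mem_singleton_iff] at hu
          simp [hu, hij]
        exact Subtype.coe_le_coe.2 (e.symm.monotone hsub)
      have hpZ : ∀ i, ¬ p i ≤ Z i := fun i h => hpx i (htrick _ i (hpA i) h)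
      have claim : ∀ T : Finset (Fin m), (↑T : Set (Fin m)) ≠ Set.univ →
          ellSet ((e.symm (↑T : Set (Fin m)) : ↥(Set.Icc x y)) : L) = ellSet x ∪ (p '' ↑T) := by
        intro T
        induction T using Finset.induction_on with
        | empty =>
          intro _
          have h0 : (e.symm (↑(∅ : Finset (Fin m)) : Set (Fin m))) = ⟨x, hxmem⟩ := by
            rw [Finset.coe_empty, ← he_x, e.symm_apply_apply]
          rw [h0]
          simp
        | @insert i T hiT ihT =>
          intro hne
          have hTne : (↑T : Set (Fin m)) ≠ Set.univ := by
            intro h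
            apply hne
            rw [Finset.coe_insert, h]
            ext u; simp
          have hcovst : ((e.symm (↑T : Set (Fin m)) : ↥(Set.Icc x y)) : L) ⋖
              ((e.symm (↑(insert i T) : Set (Fin m)) : ↥(Set.Icc x y)) : L) := by
            apply (hcovE _ _).1
            rw [e.apply_symm_apply, e.apply_symm_apply, Finset.coe_insert]
            exact Set.covBy_insert (by simpa using hiT)
          have htlt : ((e.symm (↑(insert i T) : Set (Fin m)) : ↥(Set.Icc x y)) : L) < y := by
            refine lt_of_le_of_ne (e.symm _).2.2 ?_
            intro h
            apply hne
            have h2 : (e.symm (↑(insert i T) : Set (Fin m))) = ⟨y, hymem⟩ := Subtype.ext h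
            rw [← e.apply_symm_apply (↑(insert i T) : Set (Fin m)), h2, he_y]
          obtain ⟨g, hg⟩ := ih _ htlt _ hcovst
          have hpi_mem : p i ∈ ellSet ((e.symm (↑(insert i T) : Set (Fin m)) : ↥(Set.Icc x y)) : L)
              \ ellSet ((e.symm (↑T : Set (Fin m)) : ↥(Set.Icc x y)) : L) := by
            constructor
            · refine ⟨hpJI i, ?_⟩
              have hsub : ({i} : Set (Fin m)) ⊆ ↑(insert i T) := by simp
              exact (hpA i).trans (Subtype.coe_le_coe.2 (e.symm.monotone hsub))
            · intro hm
              apply hpZ i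
              have hsub : (↑T : Set (Fin m)) ⊆ ({i}ᶜ : Set (Fin m)) := by
                intro j hj
                simp only [Set.mem_compl_iff, Set.mem_singleton_iff]
                rintro rfl
                exact hiT (by simpa using hj)
              exact hm.2.trans (Subtype.coe_le_coe.2 (e.symm.monotone hsub))
          have hgp : g = p i := by
            have h2 := hpi_mem
            rw [hg, Set.mem_singleton_iff] at h2
            exact h2.symm
          have hst : ellSet ((e.symm (↑T : Set (Fin m)) : ↥(Set.Icc x y)) : L) ⊆
              ellSet ((e.symm (↑(insert i T) : Set (Fin m)) : ↥(Set.Icc x y)) : L) :=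
            ellSet_subset_iff.2 hcovst.le
          have hdecomp : ellSet ((e.symm (↑(insert i T) : Set (Fin m)) : ↥(Set.Icc x y)) : L) =
              ellSet ((e.symm (↑T : Set (Fin m)) : ↥(Set.Icc x y)) : L) ∪ {p i} := by
            rw [← hgp, ← hg]
            exact (Set.union_diff_cancel hst).symm
          rw [hdecomp, ihT hTne, Finset.coe_insert, Set.image_insert_eq]
          ext r
          simp only [Set.mem_union, Set.mem_singleton_iff, Set.mem_insert_iff]
          tauto
      obtain ⟨i₀, hi₀⟩ := hcovZ z hzy
      refine ⟨p i₀, ?_⟩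
      ext r
      simp only [Set.mem_diff, mem_ellSet, Set.mem_singleton_iff]
      constructor
      · rintro ⟨⟨hJI', hry⟩, hrz⟩
        have hrzle : ¬ r ≤ z := fun h => hrz ⟨hJI', h⟩
        have hrny : r ≠ y := fun h => hJI (h ▸ hJI')
        have hrlty : r < y := lt_of_le_of_ne hry hrny
        obtain ⟨w, hrw, hwy⟩ := hrlty.exists_le_covby
        obtain ⟨j₀, hj₀⟩ := hcovZ w hwy
        set Tf : Finset (Fin m) := Finset.univ.filter (fun j => ¬ r ≤ Z j) with hTf
        have hTfne : (↑Tf : Set (Fin m)) ≠ Set.univ := by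
          intro h
          have hj0 : j₀ ∈ Tf := by
            have : j₀ ∈ (↑Tf : Set (Fin m)) := h ▸ Set.mem_univ _
            exact this
          have := (Finset.mem_filter.1 hj0).2
          exact this (hj₀ ▸ hrw)
        have hwIcc : x ⊔ r ∈ Set.Icc x y := ⟨le_sup_left, sup_le hxy hry⟩
        have hsub : e ⟨x ⊔ r, hwIcc⟩ ⊆ (↑Tf : Set (Fin m)) := by
          intro j hj
          simp only [hTf, Finset.coe_filter, Finset.mem_univ, true_and, Set.mem_setOf_eq]
          intro hrZ
          have hle : (⟨x ⊔ r, hwIcc⟩ : ↥(Set.Icc x y)) ≤ e.symm ({j}ᶜ : Set (Fin m)) :=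
            Subtype.coe_le_coe.1 (sup_le (e.symm ({j}ᶜ : Set (Fin m))).2.1 hrZ)
          have h2 := e.monotone hle
          rw [e.apply_symm_apply] at h2
          exact (h2 hj) rfl
        have hrle : r ≤ ((e.symm (↑Tf : Set (Fin m)) : ↥(Set.Icc x y)) : L) := by
          have hle : (⟨x ⊔ r, hwIcc⟩ : ↥(Set.Icc x y)) ≤ e.symm (↑Tf : Set (Fin m)) := by
            have h2 := e.symm.monotone hsub
            rwa [e.symm_apply_apply] at h2
          exact le_sup_right.trans (Subtype.coe_le_coe.2 hle)
        have hrmem : r ∈ ellSet x ∪ (p '' ↑Tf) := by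
          rw [← claim Tf hTfne]
          exact ⟨hJI', hrle⟩
        rcases hrmem with h | ⟨j, hjT, hpj⟩
        · exact absurd (h.2.trans (hxw z hzy)) hrzle
        · by_cases hj : j = i₀
          · rw [hj] at hpj
            exact hpj.symm
          · exfalso
            have hrZ : r ≤ z := by
              rw [hi₀]
              calc r = p j := hpj.symm
                _ ≤ A j := hpA j
                _ ≤ Z i₀ := hAZ j i₀ hj
            exact hrzle hrZ
      · rintro rfl
        refine ⟨⟨hpJI i₀, (hpA i₀).trans (hAlt i₀).le⟩, ?_⟩
        intro hm
        exact hpZ i₀ (hi₀ ▸ hm.2)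

lemma hcov_of_md (hmd : MeetDistributive L) :
    ∀ z y : L, z ⋖ y → degL y = degL z + 1 := by
  intro z y hzy
  obtain ⟨g, hg⟩ := sing_of_md hmd y z hzy
  have hsub : ellSet z ⊆ ellSet y := ellSet_subset_iff.2 hzy.le
  have h1 : ellSet y = ellSet z ∪ {g} := by
    rw [← hg]
    exact (Set.union_diff_cancel hsub).symm
  have hgz : g ∉ ellSet z := by
    have : g ∈ ellSet y \ ellSet z := by rw [hg]; rfl
    exact this.2
  rw [degL_eq_ncard, degL_eq_ncard, h1, Set.union_singleton,
    Set.ncard_insert_of_notMem hgz (Set.toFinite _)]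

end MDtoHcov

/-- Lemma 1.2 (i) ⇔ (ii) ⇔ (iii): for a finite lattice `L`, meet-distributivity is
equivalent to `L` being graded with `deg 1̂ = rank 1̂`, and also to `L` being graded with
`deg p = rank p` for all `p`.  Here the rank of `p` is `Order.height p`, the maximal length
of chains descending from `p`. -/
theorem stmt1 {L : Type*} [Fintype L] [Lattice L] [BoundedOrder L] :
    (MeetDistributive L ↔
      (IsGradedPoset L ∧ (degL (⊤ : L) : ℕ∞) = Order.height (⊤ : L))) ∧
    (MeetDistributive L ↔
      (IsGradedPoset L ∧ ∀ p : L, (degL p : ℕ∞) = Order.height p)) := by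
  have hAtoC : MeetDistributive L → IsGradedPoset L ∧ ∀ p : L, (degL p : ℕ∞) = Order.height p := by
    intro h
    have hcov := hcov_of_md h
    refine ⟨graded_of_hcov hcov, fun p => ?_⟩
    rw [degL_eq_hnat_of_hcov hcov p, coe_hnat]
  have hBtoA : (IsGradedPoset L ∧ (degL (⊤ : L) : ℕ∞) = Order.height (⊤ : L)) →
      MeetDistributive L := by
    rintro ⟨hg, htop⟩
    have htop' : degL (⊤ : L) = hnat (⊤ : L) := by
      rw [← coe_hnat] at htop
      exact_mod_cast htop
    exact md_of_hcov (hcov_of_graded_top hg htop')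
  constructor
  · constructor
    · intro h
      obtain ⟨hg, hall⟩ := hAtoC h
      exact ⟨hg, hall ⊤⟩
    · exact hBtoA
  · constructor
    · exact hAtoC
    · rintro ⟨hg, hall⟩
      exact hBtoA ⟨hg, hall ⊤⟩
end

section
/- Let L be an arbitrary finite meet-semilattice. Then L is meet-distributive if and only if the squarefree monomial ideal H_L has linear quotients. -/
open MvPolynomial

open Classical in
/-- The squarefree monomial `u_q = (∏_{p ∈ ℓ(q)} x_p)(∏_{p ∈ P∖ℓ(q)} y_p)` in
`S = K[{x_p, y_p}_{p ∈ P}]`, where `P` is the set of join-irreducible elements of `L`;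
`x_p` is `X (Sum.inl p)` and `y_p` is `X (Sum.inr p)`. -/
noncomputable def uMon {L : Type*} [Preorder L] [Fintype L] (F : Type*) [Field F] (q : L) :
    MvPolynomial ({p : L // JoinIrred p} ⊕ {p : L // JoinIrred p}) F :=
  ∏ p : {p : L // JoinIrred p},
    if (p : L) ≤ q then X (Sum.inl p) else X (Sum.inr p)

/-- `H_L = (u_q : q ∈ L)` has *linear quotients*: its minimal monomial generators, which are
exactly the monomials `u_q` for `q ∈ L`, can be ordered `u_1, …, u_m` so that each colon
ideal `(u_1, …, u_{i-1}) : u_i` is generated by a set of variables. -/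
def HasLinearQuotientsHL (L : Type*) [Preorder L] [Fintype L] (F : Type*) [Field F] : Prop :=
  ∃ e : Fin (Fintype.card L) ≃ L, ∀ i : Fin (Fintype.card L),
    ∃ T : Set ({p : L // JoinIrred p} ⊕ {p : L // JoinIrred p}),
      Submodule.colon (Ideal.span ((fun j => uMon F (e j)) '' {j | j < i}))
          (Ideal.span {uMon F (e i)}) =
        Ideal.span ((fun s => (X s : MvPolynomial _ F)) '' T)

----------------------------------------------------------------------
-- auxiliary development
----------------------------------------------------------------------
namespace HLaux

open Classical

variable {L : Type*}

section Preorder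
variable [Preorder L]

/-- `ℓ(q)`: the set of join-irreducible elements below `q`. -/
def lset (q : L) : Set {p : L // JoinIrred p} := {p | (p : L) ≤ q}

lemma mem_lset {q : L} {p : {p : L // JoinIrred p}} : p ∈ lset q ↔ (p : L) ≤ q := Iff.rfl

lemma lset_mono {q q' : L} (h : q ≤ q') : lset q ⊆ lset q' := fun _ hp => le_trans hp h

/-- The exponent vector of `u_q`. -/
noncomputable def E [Fintype L] (q : L) : ({p : L // JoinIrred p} ⊕ {p : L // JoinIrred p}) →₀ ℕ :=
  Finsupp.equivFunOnFinite.symm fun s =>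
    Sum.rec (fun p => if (p : L) ≤ q then 1 else 0) (fun p => if (p : L) ≤ q then 0 else 1) s

variable [Fintype L]

@[simp] lemma E_inl {q : L} (p : {p : L // JoinIrred p}) :
    E q (Sum.inl p) = if (p : L) ≤ q then 1 else 0 := rfl

@[simp] lemma E_inr {q : L} (p : {p : L // JoinIrred p}) :
    E q (Sum.inr p) = if (p : L) ≤ q then 0 else 1 := rfl

omit [Fintype L] in
lemma prod_monomial {ι : Type*} (F : Type*) [Field F] (s : Finset ι)
    (d : ι → ({p : L // JoinIrred p} ⊕ {p : L // JoinIrred p}) →₀ ℕ) :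
    (∏ i ∈ s, (monomial (d i) (1 : F))) = monomial (∑ i ∈ s, d i) (1 : F) := by
  classical
  induction s using Finset.induction with
  | empty => simp [monomial_zero']
  | insert a s h ih =>
      rw [Finset.prod_insert h, Finset.sum_insert h, ih, monomial_mul, one_mul]

lemma uMon_eq (F : Type*) [Field F] (q : L) :
    uMon F q = monomial (E q) (1 : F) := by
  classical
  rw [uMon]
  have h1 : ∀ p : {p : L // JoinIrred p},
      (if (p : L) ≤ q then (X (Sum.inl p) : MvPolynomial _ F) else X (Sum.inr p)) =
        monomial (Finsupp.single (if (p : L) ≤ q then Sum.inl p else Sum.inr p) 1) (1 : F) := by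
    intro p; split_ifs <;> rw [X]
  rw [Finset.prod_congr rfl (fun p _ => h1 p), prod_monomial]
  have hE : (∑ p : {p : L // JoinIrred p},
      Finsupp.single (if (p : L) ≤ q then Sum.inl p else Sum.inr p) (1:ℕ)) = E q := by
    ext s
    rw [Finsupp.finset_sum_apply]
    cases s with
    | inl p =>
        rw [Finset.sum_eq_single p]
        · simp only [Finsupp.single_apply]
          split_ifs with h1 h2 h2 <;> simp_all
        · intro b _ hb
          simp only [Finsupp.single_apply]
          split_ifs with h1 h2 <;> simp_all
        · simp
    | inr p =>
        rw [Finset.sum_eq_single p]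
        · simp only [Finsupp.single_apply]
          split_ifs with h1 h2 h2 <;> simp_all
        · intro b _ hb
          simp only [Finsupp.single_apply]
          split_ifs with h1 h2 <;> simp_all
        · simp
  rw [hE]

end Preorder

section Semi
variable [SemilatticeInf L] [Fintype L]

/-- Every element is the least upper bound of the join-irreducible elements below it. -/
lemma isLUB_lset (q : L) : IsLUB (Subtype.val '' lset q) q := by
  induction q using WellFoundedLT.induction with
  | ind q IH =>
    constructor
    · rintro _ ⟨p, hp, rfl⟩; exact hp
    · intro u hu
      by_cases hq : JoinIrred q
      · exact hu ⟨⟨q, hq⟩, le_refl q, rfl⟩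
      · rw [JoinIrred, not_not] at hq
        apply hq.2
        intro v hv
        exact (IH v hv).2 fun w hw => hu (by
          obtain ⟨p, hp, rfl⟩ := hw
          exact ⟨p, le_trans hp (le_of_lt hv), rfl⟩)

lemma le_iff_lset {q q' : L} : q ≤ q' ↔ lset q ⊆ lset q' := by
  refine ⟨lset_mono, fun h => ?_⟩
  exact (isLUB_lset q).2 (by rintro _ ⟨p, hp, rfl⟩; exact (isLUB_lset q').1 ⟨p, h hp, rfl⟩)

lemma lset_injective : Function.Injective (lset (L := L)) := fun a b h =>
  le_antisymm (le_iff_lset.2 h.le) (le_iff_lset.2 h.ge)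

lemma lset_inf (a b : L) : lset (a ⊓ b) = lset a ∩ lset b := by
  ext p; simp [mem_lset, le_inf_iff, Set.mem_inter_iff]

lemma lset_diff_nonempty {z y : L} (h : z < y) : (lset y \ lset z).Nonempty := by
  by_contra hne
  rw [Set.not_nonempty_iff_eq_empty, Set.diff_eq_empty] at hne
  exact absurd (le_iff_lset.2 hne) (not_le_of_gt h)

lemma exists_cover_between {v y : L} (h : v < y) : ∃ z, v ≤ z ∧ z ⋖ y := by
  classical
  obtain ⟨z, hvz, hz⟩ := (Finset.univ.filter (fun w : L => w < y)).exists_le_maximal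
    (a := v) (by simp [h])
  refine ⟨z, hvz, ?_, fun {w} hzw hwy => ?_⟩
  · exact (Finset.mem_filter.1 hz.1).2
  · exact absurd (hz.2 (by simp [hwy]) hzw.le) (not_le_of_gt hzw)

/-- Each covering step adds exactly one join-irreducible. -/
def CoversAddOne (L : Type*) [SemilatticeInf L] : Prop :=
  ∀ ⦃z y : L⦄, z ⋖ y → ∃ p : {p : L // JoinIrred p}, p ∉ lset z ∧ lset y = insert p (lset z)

lemma lset_eq_diff {z y : L} {p : {p : L // JoinIrred p}} (h1 : p ∉ lset z)
    (h2 : lset y = insert p (lset z)) : lset z = lset y \ {p} := by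
  rw [h2, Set.insert_diff_self_of_notMem h1]

lemma coversAddOne_meetDistributive (hC : CoversAddOne L) : MeetDistributive L := by
  intro x y hxy hglb
  rcases eq_or_lt_of_le hxy with rfl | hlt
  · haveI h1 : Unique (Set.Icc x x) :=
      ⟨⟨⟨x, le_refl x, le_refl x⟩⟩, fun a => Subtype.ext (le_antisymm a.2.2 a.2.1)⟩
    haveI h2 : Unique (Set (Fin 0)) :=
      ⟨⟨∅⟩, fun S => Set.eq_empty_of_isEmpty S |>.symm ▸ rfl⟩
    refine ⟨0, ⟨{ toEquiv := Equiv.ofUnique _ _, map_rel_iff' := ?_ }⟩⟩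
    intro a b
    exact iff_of_true (le_of_eq (Subsingleton.elim _ _)) (le_of_eq (Subsingleton.elim _ _))
  set Z : Set L := {z | x ≤ z ∧ z ⋖ y} with hZ
  haveI : Fintype ↥Z := Fintype.ofFinite _
  choose pfun hp1 hp2 using fun z : ↥Z => hC z.2.2
  have pinj : Function.Injective pfun := by
    intro a b hab
    have := (lset_eq_diff (hp1 a) (hp2 a)).trans (hab ▸ (lset_eq_diff (hp1 b) (hp2 b)).symm)
    exact Subtype.ext (lset_injective this)
  have pfy : ∀ z : ↥Z, pfun z ∈ lset y := fun z => (hp2 z) ▸ Set.mem_insert _ _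
  have lsx : lset x = lset y \ Set.range pfun := by
    apply Set.Subset.antisymm
    · rintro p hp
      refine ⟨lset_mono hxy hp, ?_⟩
      rintro ⟨z, rfl⟩
      exact hp1 z (lset_mono z.2.1 hp)
    · rintro p ⟨hpy, hpr⟩
      have : (p : L) ∈ lowerBounds Z := by
        intro z hz
        have : p ∈ lset z := by
          have := hp2 ⟨z, hz⟩
          rw [this] at hpy
          rcases hpy with h | h
          · exact absurd ⟨⟨z, hz⟩, h.symm⟩ hpr
          · exact h
        exact this
      exact hglb.2 this
  have lyx : lset y ⊆ lset x ∪ Set.range pfun := by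
    intro p hp
    by_cases h : p ∈ Set.range pfun
    · exact Or.inr h
    · exact Or.inl (lsx ▸ ⟨hp, h⟩)
  set n := Fintype.card ↥Z with hn
  set e : ↥Z ≃ Fin n := Fintype.equivFin ↥Z with he
  set Φ : Set.Icc x y → Set (Fin n) := fun w => {m | pfun (e.symm m) ∈ lset (w : L)} with hΦ
  have mono : ∀ {w w' : Set.Icc x y}, w ≤ w' → Φ w ⊆ Φ w' := by
    intro w w' hww m hm
    exact lset_mono (Subtype.coe_le_coe.2 hww) hm
  have reflect : ∀ {w w' : Set.Icc x y}, Φ w ⊆ Φ w' → w ≤ w' := by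
    intro w w' hww
    rw [← Subtype.coe_le_coe, le_iff_lset]
    intro p hp
    rcases lyx (lset_mono w.2.2 hp) with h | ⟨z, rfl⟩
    · exact lset_mono w'.2.1 h
    · have : e.symm (e z) = z := e.symm_apply_apply z
      have hm : (e z) ∈ Φ w := by rw [hΦ]; simp only [Set.mem_setOf_eq, this]; exact hp
      have := hww hm
      rw [hΦ] at this
      simp only [Set.mem_setOf_eq, e.symm_apply_apply] at this
      exact this
  have hsurj : Function.Surjective Φ := by
    intro S
    classical
    by_cases hS : S = Set.univ
    · refine ⟨⟨y, hxy, le_refl y⟩, ?_⟩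
      rw [hS]; ext m; simp only [Set.mem_univ, iff_true, hΦ, Set.mem_setOf_eq]
      exact pfy _
    · have hF : (Finset.univ.filter (fun m : Fin n => m ∉ S)).Nonempty := by
        by_contra hc
        rw [Finset.not_nonempty_iff_eq_empty, Finset.filter_eq_empty_iff] at hc
        exact hS (Set.eq_univ_of_forall fun m => not_not.1 (hc (Finset.mem_univ m)))
      set F := Finset.univ.filter (fun m : Fin n => m ∉ S) with hFdef
      set w0 : L := F.inf' hF (fun m => ((e.symm m : ↥Z) : L)) with hw0
      have hxw0 : x ≤ w0 := Finset.le_inf' hF _ fun m _ => (e.symm m).2.1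
      have hw0y : w0 ≤ y := by
        obtain ⟨m0, hm0⟩ := hF
        exact le_trans (Finset.inf'_le _ hm0) (e.symm m0).2.2.lt.le
      refine ⟨⟨w0, hxw0, hw0y⟩, ?_⟩
      ext m'
      rw [hΦ]
      simp only [Set.mem_setOf_eq, mem_lset]
      constructor
      · intro hall
        by_contra hm'
        have hmF : m' ∈ F := Finset.mem_filter.2 ⟨Finset.mem_univ m', hm'⟩
        have : (pfun (e.symm m') : L) ≤ ((e.symm m' : ↥Z) : L) :=
          le_trans hall (by rw [hw0]; exact Finset.inf'_le _ hmF)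
        exact hp1 (e.symm m') this
      · intro hm'
        rw [hw0]
        refine Finset.le_inf' hF _ fun m hm => ?_
        have hmm' : m ≠ m' := by
          intro h; subst h
          exact (Finset.mem_filter.1 hm).2 hm'
        have hne : pfun (e.symm m') ≠ pfun (e.symm m) :=
          fun h => hmm' (by simpa using (e.symm.injective (pinj h)).symm)
        have hy := pfy (e.symm m')
        rw [hp2 (e.symm m)] at hy
        rcases hy with h | h
        · exact absurd h hne
        · exact h
  have hinj : Function.Injective Φ := by
    intro a b hab
    exact le_antisymm (reflect hab.le) (reflect hab.ge)
  refine ⟨n, ⟨{ toEquiv := Equiv.ofBijective Φ ⟨hinj, hsurj⟩, map_rel_iff' := ?_ }⟩⟩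
  intro a b
  exact ⟨fun h => reflect h, fun h => mono h⟩

lemma covBy_Icc {x y : L} {a b : Set.Icc x y} : a ⋖ b ↔ (a : L) ⋖ (b : L) := by
  constructor
  · intro h
    have hlt : (a : L) < (b : L) := Subtype.coe_lt_coe.2 h.lt
    have h2 : ∀ c : L, (a : L) < c → c < (b : L) → False := by
      intro c hac hcb
      have hc : c ∈ Set.Icc x y := Set.mem_Icc.2 ⟨le_trans a.2.1 hac.le, le_trans hcb.le b.2.2⟩
      exact h.2 (show a < ⟨c, hc⟩ from Subtype.coe_lt_coe.1 hac)
        (show (⟨c, hc⟩ : Set.Icc x y) < b from Subtype.coe_lt_coe.1 hcb)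
    exact ⟨hlt, fun c hac hcb => h2 c hac hcb⟩
  · intro h
    have hlt : a < b := Subtype.coe_lt_coe.1 h.lt
    exact ⟨hlt, fun c hac hcb =>
      h.2 (Subtype.coe_lt_coe.2 hac) (Subtype.coe_lt_coe.2 hcb)⟩

lemma meetDistributive_coversAddOne (hMD : MeetDistributive L) : CoversAddOne L := by
  have main : ∀ y z : L, z ⋖ y →
      ∃ p : {p : L // JoinIrred p}, p ∉ lset z ∧ lset y = insert p (lset z) := by
    intro y
    induction y using WellFoundedLT.induction with
    | ind y IH =>
      intro z₁ hz₁
      -- it suffices to prove uniqueness of the added join-irreducible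
      suffices huniq : ∀ p p' : {p : L // JoinIrred p},
          p ∈ lset y \ lset z₁ → p' ∈ lset y \ lset z₁ → p = p' by
        obtain ⟨p, hp⟩ := lset_diff_nonempty hz₁.lt
        refine ⟨p, hp.2, ?_⟩
        apply Set.Subset.antisymm
        · intro q hq
          by_cases hqz : q ∈ lset z₁
          · exact Set.mem_insert_of_mem _ hqz
          · exact (huniq q p ⟨hq, hqz⟩ hp) ▸ Set.mem_insert _ _
        · exact Set.insert_subset hp.1 (lset_mono hz₁.le)
      by_cases hcase : ∀ z, z ⋖ y → z = z₁
      · -- unique lower cover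
        have hJI : JoinIrred y := by
          intro hl
          have : y ≤ z₁ := hl.2 (by
            intro v hv
            obtain ⟨z, hvz, hzc⟩ := exists_cover_between hv
            exact (hcase z hzc) ▸ hvz)
          exact absurd this (not_le_of_gt hz₁.lt)
        have key : ∀ p : {p : L // JoinIrred p}, p ∈ lset y \ lset z₁ → (p : L) = y := by
          rintro p ⟨hpy, hpz⟩
          rcases eq_or_lt_of_le (hpy : (p : L) ≤ y) with h | h
          · exact h
          · obtain ⟨z, hpz', hzc⟩ := exists_cover_between h
            exact absurd ((hcase z hzc) ▸ hpz' : (p : L) ≤ z₁) hpz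
        intro p p' hp hp'
        exact Subtype.ext ((key p hp).trans (key p' hp').symm)
      · push_neg at hcase
        obtain ⟨z₂, hz₂, hz₂ne⟩ := hcase
        classical
        -- the meet of all lower covers of `y`
        set Z : Finset L := Finset.univ.filter (fun z => z ⋖ y) with hZdef
        have hz₁Z : z₁ ∈ Z := Finset.mem_filter.2 ⟨Finset.mem_univ _, hz₁⟩
        have hZne : Z.Nonempty := ⟨z₁, hz₁Z⟩
        set x₀ : L := Z.inf' hZne id with hx₀
        have hx₀le : ∀ z, z ⋖ y → x₀ ≤ z := by
          intro z hz
          have : z ∈ Z := Finset.mem_filter.2 ⟨Finset.mem_univ _, hz⟩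
          exact Finset.inf'_le id this
        have hx₀y : x₀ ≤ y := le_trans (hx₀le z₁ hz₁) hz₁.le
        have hglb : IsGLB {z | x₀ ≤ z ∧ z ⋖ y} x₀ := by
          constructor
          · rintro w ⟨_, hw⟩; exact hx₀le w hw
          · intro w hw
            refine Finset.le_inf' hZne id fun b hb => ?_
            have hbc : b ⋖ y := (Finset.mem_filter.1 hb).2
            exact hw ⟨hx₀le b hbc, hbc⟩
        obtain ⟨n, ⟨φ⟩⟩ := hMD x₀ y hx₀y hglb
        have memIcc : ∀ {z : L}, z ⋖ y → z ∈ Set.Icc x₀ y := fun {z} hz =>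
          ⟨hx₀le z hz, hz.le⟩
        have ytop : ∀ a : Set.Icc x₀ y, a ≤ (⟨y, ⟨hx₀y, le_refl y⟩⟩ : Set.Icc x₀ y) :=
          fun a => Subtype.coe_le_coe.1 a.2.2
        have φtop : φ ⟨y, ⟨hx₀y, le_refl y⟩⟩ = Set.univ := by
          apply Set.eq_univ_of_univ_subset
          intro m _
          have := φ.monotone (ytop (φ.symm (Set.univ : Set (Fin n))))
          rw [φ.apply_symm_apply] at this
          exact this trivial
        -- coatoms
        have coatom : ∀ {z : L} (hz : z ⋖ y), ∃ c, φ ⟨z, memIcc hz⟩ = Set.univ \ {c} := by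
          intro z hz
          have h1 : (⟨z, memIcc hz⟩ : Set.Icc x₀ y) ⋖ ⟨y, ⟨hx₀y, le_refl y⟩⟩ :=
            covBy_Icc.2 hz
          have h2 : φ ⟨z, memIcc hz⟩ ⋖ φ ⟨y, ⟨hx₀y, le_refl y⟩⟩ :=
            (apply_covBy_apply_iff φ).2 h1
          rw [φtop] at h2
          obtain ⟨c, hc, hins⟩ := Set.covBy_iff_exists_insert.1 h2
          refine ⟨c, ?_⟩
          ext m
          constructor
          · intro hm
            exact ⟨trivial, fun hmc => hc (Set.mem_singleton_iff.1 hmc ▸ hm)⟩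
          · rintro ⟨-, hmc⟩
            have : m ∈ insert c (φ ⟨z, memIcc hz⟩) := hins ▸ trivial
            rcases this with h | h
            · exact absurd h hmc
            · exact h
        -- meet transfer
        have meetT : ∀ (a b : Set.Icc x₀ y) (h : (a : L) ⊓ (b : L) ∈ Set.Icc x₀ y),
            φ ⟨(a : L) ⊓ (b : L), h⟩ = φ a ∩ φ b := by
          intro a b h
          apply Set.Subset.antisymm
          · exact Set.subset_inter
              (φ.monotone (Subtype.mk_le_mk.2 inf_le_left))
              (φ.monotone (Subtype.mk_le_mk.2 inf_le_right))
          · set c := φ.symm (φ a ∩ φ b) with hcdef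
            have hca : c ≤ a := by
              rw [← φ.le_iff_le, φ.apply_symm_apply]; exact Set.inter_subset_left
            have hcb : c ≤ b := by
              rw [← φ.le_iff_le, φ.apply_symm_apply]; exact Set.inter_subset_right
            have : c ≤ ⟨(a : L) ⊓ (b : L), h⟩ :=
              Subtype.mk_le_mk.2 (le_inf (Subtype.coe_le_coe.2 hca) (Subtype.coe_le_coe.2 hcb))
            have := φ.monotone this
            rw [φ.apply_symm_apply] at this
            exact this
        -- distinct covers give distinct coatom-points
        have cdist : ∀ {z z' : L} (hz : z ⋖ y) (hz' : z' ⋖ y) {c c' : Fin n},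
            z ≠ z' → φ ⟨z, memIcc hz⟩ = Set.univ \ {c} →
            φ ⟨z', memIcc hz'⟩ = Set.univ \ {c'} → c ≠ c' := by
          intro z z' hz hz' c c' hne h1 h2 hcc
          apply hne
          have : φ ⟨z, memIcc hz⟩ = φ ⟨z', memIcc hz'⟩ := by rw [h1, h2, hcc]
          exact congrArg Subtype.val (φ.injective this)
        have F1 : ∀ {z z' : L}, z ⋖ y → z' ⋖ y → z' ≠ z → z' ⊓ z ⋖ z := by
          intro z z' hz hz' hne
          obtain ⟨c, hc⟩ := coatom hz
          obtain ⟨c', hc'⟩ := coatom hz'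
          have hcc : c' ≠ c := cdist hz' hz hne hc' hc
          have hmem : z' ⊓ z ∈ Set.Icc x₀ y := Set.mem_Icc.2
            ⟨le_inf (hx₀le _ hz') (hx₀le _ hz), le_trans inf_le_right hz.le⟩
          have h0 : φ ⟨z' ⊓ z, hmem⟩ = φ ⟨z', memIcc hz'⟩ ∩ φ ⟨z, memIcc hz⟩ :=
            meetT ⟨z', memIcc hz'⟩ ⟨z, memIcc hz⟩ hmem
          have hφm : φ ⟨z' ⊓ z, hmem⟩ = (Set.univ \ {c}) \ {c'} := by
            rw [h0, hc, hc']
            ext t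
            simp only [Set.mem_inter_iff, Set.mem_diff, Set.mem_univ, true_and,
              Set.mem_singleton_iff]
            tauto
          have hcov : φ ⟨z' ⊓ z, hmem⟩ ⋖ φ ⟨z, memIcc hz⟩ := by
            rw [hφm, hc]
            exact Set.sdiff_singleton_covBy
              ((Set.mem_diff _).2 ⟨trivial, fun h => hcc (Set.mem_singleton_iff.1 h)⟩)
          exact covBy_Icc.1 ((apply_covBy_apply_iff φ).1 hcov)
        have F2 : ∀ {za zb zc : L}, za ⋖ y → zb ⋖ y → zc ⋖ y →
            za ≠ zb → za ≠ zc → zb ≠ zc → za ⊓ (zb ⊓ zc) ⋖ zb ⊓ zc := by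
          intro za zb zc ha hb hc hab hac hbc
          obtain ⟨ca, hca⟩ := coatom ha
          obtain ⟨cb, hcb⟩ := coatom hb
          obtain ⟨cc, hcc⟩ := coatom hc
          have hcab : ca ≠ cb := cdist ha hb hab hca hcb
          have hcac : ca ≠ cc := cdist ha hc hac hca hcc
          have hmembc : zb ⊓ zc ∈ Set.Icc x₀ y := Set.mem_Icc.2
            ⟨le_inf (hx₀le _ hb) (hx₀le _ hc), le_trans inf_le_left hb.le⟩
          have hmemabc : za ⊓ (zb ⊓ zc) ∈ Set.Icc x₀ y := Set.mem_Icc.2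
            ⟨le_inf (hx₀le _ ha) (Set.mem_Icc.1 hmembc).1, le_trans inf_le_left ha.le⟩
          have h1 : φ ⟨zb ⊓ zc, hmembc⟩ = φ ⟨zb, memIcc hb⟩ ∩ φ ⟨zc, memIcc hc⟩ :=
            meetT ⟨zb, memIcc hb⟩ ⟨zc, memIcc hc⟩ hmembc
          have h2 : φ ⟨za ⊓ (zb ⊓ zc), hmemabc⟩ = φ ⟨za, memIcc ha⟩ ∩ φ ⟨zb ⊓ zc, hmembc⟩ :=
            meetT ⟨za, memIcc ha⟩ ⟨zb ⊓ zc, hmembc⟩ hmemabc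
          have h3 : φ ⟨za ⊓ (zb ⊓ zc), hmemabc⟩ = φ ⟨zb ⊓ zc, hmembc⟩ \ {ca} := by
            rw [h2, hca]
            ext t
            simp only [Set.mem_inter_iff, Set.mem_diff, Set.mem_univ, true_and,
              Set.mem_singleton_iff]
            tauto
          have hcamem : ca ∈ φ ⟨zb ⊓ zc, hmembc⟩ := by
            rw [h1, hcb, hcc]
            exact ⟨(Set.mem_diff _).2 ⟨trivial, fun h => hcab (Set.mem_singleton_iff.1 h)⟩,
              (Set.mem_diff _).2 ⟨trivial, fun h => hcac (Set.mem_singleton_iff.1 h)⟩⟩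
          have hcov : φ ⟨za ⊓ (zb ⊓ zc), hmemabc⟩ ⋖ φ ⟨zb ⊓ zc, hmembc⟩ := by
            rw [h3]
            exact Set.sdiff_singleton_covBy hcamem
          exact covBy_Icc.1 ((apply_covBy_apply_iff φ).1 hcov)
        have F3 : ∀ {z z' : L}, z ⋖ y → z' ⋖ y → z ≠ z' → ∀ u, z ≤ u → z' ≤ u → y ≤ u := by
          intro z z' hz hz' hne u hzu hz'u
          obtain ⟨c, hc⟩ := coatom hz
          obtain ⟨c', hc'⟩ := coatom hz'
          have hcc : c ≠ c' := cdist hz hz' hne hc hc'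
          have hmem : u ⊓ y ∈ Set.Icc x₀ y := Set.mem_Icc.2
            ⟨le_trans (hx₀le _ hz) (le_inf hzu hz.le), inf_le_right⟩
          have hle1 : (⟨z, memIcc hz⟩ : Set.Icc x₀ y) ≤ ⟨u ⊓ y, hmem⟩ :=
            Subtype.mk_le_mk.2 (le_inf hzu hz.le)
          have hle2 : (⟨z', memIcc hz'⟩ : Set.Icc x₀ y) ≤ ⟨u ⊓ y, hmem⟩ :=
            Subtype.mk_le_mk.2 (le_inf hz'u hz'.le)
          have huniv : φ ⟨u ⊓ y, hmem⟩ = Set.univ := by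
            apply Set.eq_univ_of_univ_subset
            intro t _
            by_cases htc : t = c
            · have : t ∈ φ ⟨z', memIcc hz'⟩ := by
                rw [hc']
                exact (Set.mem_diff _).2 ⟨trivial,
                  fun h => hcc (htc ▸ Set.mem_singleton_iff.1 h)⟩
              exact φ.monotone hle2 this
            · have : t ∈ φ ⟨z, memIcc hz⟩ := by
                rw [hc]
                exact (Set.mem_diff _).2 ⟨trivial, fun h => htc (Set.mem_singleton_iff.1 h)⟩
              exact φ.monotone hle1 this
          have : φ ⟨u ⊓ y, hmem⟩ = φ ⟨y, ⟨hx₀y, le_refl y⟩⟩ := by rw [huniv, φtop]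
          have heq : u ⊓ y = y := congrArg Subtype.val (φ.injective this)
          calc y = u ⊓ y := heq.symm
            _ ≤ u := inf_le_left
        have hnotJI : ¬ JoinIrred y := by
          rw [JoinIrred, not_not]
          constructor
          · intro v hv; exact le_of_lt hv
          · intro u hu
            exact F3 hz₁ hz₂ (Ne.symm hz₂ne) u (hu hz₁.lt) (hu hz₂.lt)
        have hQ : ∀ z, z ⋖ y → z ≠ z₁ → ∃ q, lset z \ lset z₁ = {q} := by
          intro z hz hne
          have hcov : z₁ ⊓ z ⋖ z := F1 hz hz₁ (Ne.symm hne)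
          obtain ⟨q, hq1, hq2⟩ := IH z hz.lt (z₁ ⊓ z) hcov
          have hqz : q ∈ lset z := hq2 ▸ Set.mem_insert _ _
          have hqz₁ : q ∉ lset z₁ := fun h =>
            hq1 ((lset_inf z₁ z) ▸ Set.mem_inter h hqz)
          refine ⟨q, ?_⟩
          ext r
          constructor
          · rintro ⟨hrz, hrz₁⟩
            have : r ∈ insert q (lset (z₁ ⊓ z)) := hq2 ▸ hrz
            rcases this with h | h
            · exact h
            · exact absurd (((lset_inf z₁ z) ▸ h : r ∈ lset z₁ ∩ lset z)).1 hrz₁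
          · rintro rfl
            exact ⟨hqz, hqz₁⟩
        intro p p' hp hp'
        have hplty : ∀ r : {p : L // JoinIrred p}, r ∈ lset y \ lset z₁ → (r : L) < y := by
          rintro r ⟨hry, -⟩
          exact lt_of_le_of_ne hry (fun h => hnotJI (h ▸ r.2))
        obtain ⟨zp, hpzp, hzpc⟩ := exists_cover_between (hplty p hp)
        have hzpne : zp ≠ z₁ := fun h => hp.2 (h ▸ hpzp)
        obtain ⟨qp, hqp⟩ := hQ zp hzpc hzpne
        have hpeq : p = qp := by
          have : p ∈ lset zp \ lset z₁ := ⟨hpzp, hp.2⟩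
          rw [hqp] at this; exact this
        obtain ⟨zp', hpzp', hzpc'⟩ := exists_cover_between (hplty p' hp')
        have hzpne' : zp' ≠ z₁ := fun h => hp'.2 (h ▸ hpzp')
        obtain ⟨qp', hqp'⟩ := hQ zp' hzpc' hzpne'
        have hpeq' : p' = qp' := by
          have : p' ∈ lset zp' \ lset z₁ := ⟨hpzp', hp'.2⟩
          rw [hqp'] at this; exact this
        by_cases hzz : zp = zp'
        · subst hzz
          rw [hpeq, hpeq', Set.singleton_eq_singleton_iff.1 (hqp.symm.trans hqp')]
        · have hwy : zp ⊓ zp' < y := lt_of_le_of_lt inf_le_left hzpc.lt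
          have hcov2 : z₁ ⊓ (zp ⊓ zp') ⋖ zp ⊓ zp' :=
            F2 hz₁ hzpc hzpc' (Ne.symm hzpne) (Ne.symm hzpne') hzz
          obtain ⟨r, hr1, hr2⟩ := IH (zp ⊓ zp') hwy (z₁ ⊓ (zp ⊓ zp')) hcov2
          have hrw : r ∈ lset (zp ⊓ zp') := hr2 ▸ Set.mem_insert _ _
          have hrz₁ : r ∉ lset z₁ := fun h =>
            hr1 ((lset_inf z₁ (zp ⊓ zp')) ▸ Set.mem_inter h hrw)
          have hrzp : r ∈ lset zp := ((lset_inf zp zp') ▸ hrw : r ∈ lset zp ∩ lset zp').1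
          have hrzp' : r ∈ lset zp' := ((lset_inf zp zp') ▸ hrw : r ∈ lset zp ∩ lset zp').2
          have h1 : r = qp := by
            have : r ∈ lset zp \ lset z₁ := ⟨hrzp, hrz₁⟩
            rw [hqp] at this; exact this
          have h2 : r = qp' := by
            have : r ∈ lset zp' \ lset z₁ := ⟨hrzp', hrz₁⟩
            rw [hqp'] at this; exact this
          rw [hpeq, hpeq', ← h1, ← h2]
  intro z y h
  exact main y z h


lemma Eflip {q q' : L} {s : {p : L // JoinIrred p} ⊕ {p : L // JoinIrred p}}
    (hle : E q' ≤ Finsupp.single s 1 + E q) (hne : q' ≠ q) :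
    (∃ p, s = Sum.inl p ∧ p ∉ lset q ∧ lset q' = insert p (lset q)) ∨
    (∃ p, s = Sum.inr p ∧ p ∈ lset q ∧ lset q' = lset q \ {p}) := by
  rw [Finsupp.le_def] at hle
  cases s with
  | inl p =>
    left
    have haux : ∀ p'', p'' ≠ p → (p'' ∈ lset q' ↔ p'' ∈ lset q) := by
      intro p'' hpp
      have e1 : (Finsupp.single (Sum.inl p) 1 : ({p : L // JoinIrred p} ⊕ {p : L // JoinIrred p}) →₀ ℕ) (Sum.inl p'') = 0 :=
        Finsupp.single_eq_of_ne' (fun h => hpp (Sum.inl.inj h).symm)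
      have e2 : (Finsupp.single (Sum.inl p) 1 : ({p : L // JoinIrred p} ⊕ {p : L // JoinIrred p}) →₀ ℕ) (Sum.inr p'') = 0 :=
        Finsupp.single_eq_of_ne (by simp)
      have h1 := hle (Sum.inl p'')
      rw [Finsupp.add_apply, e1, zero_add] at h1
      have h2 := hle (Sum.inr p'')
      rw [Finsupp.add_apply, e2, zero_add] at h2
      constructor
      · intro hmem
        by_contra hq
        rw [E_inl, E_inl, if_pos (mem_lset.1 hmem), if_neg (fun h => hq (mem_lset.2 h))] at h1
        exact Nat.not_succ_le_zero 0 h1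
      · intro hmem
        by_contra hq
        rw [E_inr, E_inr, if_neg (fun h => hq (mem_lset.2 h)), if_pos (mem_lset.1 hmem)] at h2
        exact Nat.not_succ_le_zero 0 h2
    have e3 : (Finsupp.single (Sum.inl p) 1 : ({p : L // JoinIrred p} ⊕ {p : L // JoinIrred p}) →₀ ℕ) (Sum.inr p) = 0 :=
      Finsupp.single_eq_of_ne (by simp)
    have h3 := hle (Sum.inr p)
    rw [Finsupp.add_apply, e3, zero_add, E_inr, E_inr] at h3
    have hpq : p ∉ lset q := by
      intro hpq
      rw [if_pos (mem_lset.1 hpq)] at h3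
      have hpq' : p ∈ lset q' := by
        by_contra hq
        rw [if_neg (fun h => hq (mem_lset.2 h))] at h3
        exact Nat.not_succ_le_zero 0 h3
      apply hne
      apply lset_injective
      ext p''
      by_cases hpp : p'' = p
      · subst hpp
        exact iff_of_true hpq' hpq
      · exact haux p'' hpp
    have hpq' : p ∈ lset q' := by
      by_contra hq
      apply hne
      apply lset_injective
      ext p''
      by_cases hpp : p'' = p
      · subst hpp
        exact iff_of_false hq hpq
      · exact haux p'' hpp
    refine ⟨p, rfl, hpq, ?_⟩
    ext p''
    by_cases hpp : p'' = p
    · subst hpp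
      exact iff_of_true hpq' (Set.mem_insert _ _)
    · rw [haux p'' hpp]
      constructor
      · exact fun h => Set.mem_insert_of_mem _ h
      · intro h
        rcases h with h | h
        · exact absurd h hpp
        · exact h
  | inr p =>
    right
    have haux : ∀ p'', p'' ≠ p → (p'' ∈ lset q' ↔ p'' ∈ lset q) := by
      intro p'' hpp
      have e1 : (Finsupp.single (Sum.inr p) 1 : ({p : L // JoinIrred p} ⊕ {p : L // JoinIrred p}) →₀ ℕ) (Sum.inl p'') = 0 :=
        Finsupp.single_eq_of_ne (by simp)
      have e2 : (Finsupp.single (Sum.inr p) 1 : ({p : L // JoinIrred p} ⊕ {p : L // JoinIrred p}) →₀ ℕ) (Sum.inr p'') = 0 :=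
        Finsupp.single_eq_of_ne' (fun h => hpp (Sum.inr.inj h).symm)
      have h1 := hle (Sum.inl p'')
      rw [Finsupp.add_apply, e1, zero_add] at h1
      have h2 := hle (Sum.inr p'')
      rw [Finsupp.add_apply, e2, zero_add] at h2
      constructor
      · intro hmem
        by_contra hq
        rw [E_inl, E_inl, if_pos (mem_lset.1 hmem), if_neg (fun h => hq (mem_lset.2 h))] at h1
        exact Nat.not_succ_le_zero 0 h1
      · intro hmem
        by_contra hq
        rw [E_inr, E_inr, if_neg (fun h => hq (mem_lset.2 h)), if_pos (mem_lset.1 hmem)] at h2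
        exact Nat.not_succ_le_zero 0 h2
    have e3 : (Finsupp.single (Sum.inr p) 1 : ({p : L // JoinIrred p} ⊕ {p : L // JoinIrred p}) →₀ ℕ) (Sum.inl p) = 0 :=
      Finsupp.single_eq_of_ne (by simp)
    have h3 := hle (Sum.inl p)
    rw [Finsupp.add_apply, e3, zero_add, E_inl, E_inl] at h3
    have hpq : p ∈ lset q := by
      by_contra hpq
      rw [if_neg (fun h => hpq (mem_lset.2 h))] at h3
      have hpq' : p ∉ lset q' := by
        intro hq
        rw [if_pos (mem_lset.1 hq)] at h3
        exact Nat.not_succ_le_zero 0 h3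
      apply hne
      apply lset_injective
      ext p''
      by_cases hpp : p'' = p
      · subst hpp
        exact iff_of_false hpq' hpq
      · exact haux p'' hpp
    have hpq' : p ∉ lset q' := by
      intro hq
      apply hne
      apply lset_injective
      ext p''
      by_cases hpp : p'' = p
      · subst hpp
        exact iff_of_true hq hpq
      · exact haux p'' hpp
    refine ⟨p, rfl, hpq, ?_⟩
    ext p''
    by_cases hpp : p'' = p
    · subst hpp
      exact iff_of_false hpq' (fun h => h.2 rfl)
    · rw [haux p'' hpp]
      exact ⟨fun h => ⟨h, fun hs => hpp (Set.mem_singleton_iff.1 hs)⟩, fun h => h.1⟩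

lemma E_le_inr {q q' : L} {p : {p : L // JoinIrred p}} (h1 : p ∈ lset q)
    (h2 : lset q' = lset q \ {p}) :
    E q' ≤ Finsupp.single (Sum.inr p) 1 + E q := by
  rw [Finsupp.le_def]
  intro t
  rw [Finsupp.add_apply]
  cases t with
  | inl p'' =>
    by_cases hm : p'' ∈ lset q'
    · have hmq : p'' ∈ lset q := ((h2 ▸ hm : p'' ∈ lset q \ {p})).1
      rw [E_inl, E_inl, if_pos (mem_lset.1 hm), if_pos (mem_lset.1 hmq)]
      exact Nat.le_add_left 1 _
    · rw [E_inl, if_neg (fun h => hm (mem_lset.2 h))]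
      exact Nat.zero_le _
  | inr p'' =>
    by_cases hm : p'' ∈ lset q'
    · rw [E_inr (q := q'), if_pos (mem_lset.1 hm)]
      exact Nat.zero_le _
    · rw [E_inr (q := q'), if_neg (fun h => hm (mem_lset.2 h))]
      by_cases hpp : p'' = p
      · subst hpp
        rw [Finsupp.single_eq_same]
        exact Nat.le_add_right 1 _
      · have hq : p'' ∉ lset q := by
          intro h
          exact hm (h2 ▸ Set.mem_diff_of_mem h
            (fun hs => hpp (Set.mem_singleton_iff.1 hs)))
        rw [E_inr, if_neg (fun h => hq (mem_lset.2 h))]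
        exact Nat.le_add_left 1 _

lemma forward_core (hC : CoversAddOne L) {r q : L} (hne : r ≠ q) (hnlt : ¬ q < r) :
    ∃ (z : L) (p : {p : L // JoinIrred p}), z ⋖ q ∧ p ∈ lset q ∧ p ∉ lset r ∧
      lset z = lset q \ {p} := by
  have hs : r ⊓ q < q := by
    refine lt_of_le_of_ne inf_le_right (fun h => ?_)
    have hq : q ≤ r := h ▸ inf_le_left
    rcases eq_or_lt_of_le hq with h' | h'
    · exact hne h'.symm
    · exact hnlt h'
  obtain ⟨z, hsz, hzc⟩ := exists_cover_between hs
  obtain ⟨p, hp1, hp2⟩ := hC hzc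
  have hpq : p ∈ lset q := hp2 ▸ Set.mem_insert _ _
  refine ⟨z, p, hzc, hpq, ?_, lset_eq_diff hp1 hp2⟩
  intro hpr
  exact hp1 (lset_mono hsz ((lset_inf r q) ▸ Set.mem_inter hpr hpq))

end Semi

section Alg
variable [SemilatticeInf L] [Fintype L] (F : Type*) [Field F]

lemma span_image_eq (e : Fin (Fintype.card L) ≃ L) (i : Fin (Fintype.card L)) :
    ((fun j => uMon F (e j)) '' {j | j < i}) =
      ((fun ν => monomial ν (1 : F)) '' ((fun j => E (e j)) '' {j | j < i})) := by
  rw [Set.image_image]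
  exact Set.image_congr fun j _ => uMon_eq F (e j)

lemma monomial_mem_supp (ν : ({p : L // JoinIrred p} ⊕ {p : L // JoinIrred p}) →₀ ℕ) :
    ν ∈ (monomial ν (1 : F)).support := by
  classical
  rw [support_monomial, if_neg one_ne_zero]
  exact Finset.mem_singleton_self ν

lemma coversAddOne_hasLinearQuotients (hC : CoversAddOne L) : HasLinearQuotientsHL L F := by
  classical
  letI : Fintype (LinearExtension L) := ‹Fintype L›
  let g : Fin (Fintype.card L) ≃o LinearExtension L := monoEquivOfFin (LinearExtension L) rfl
  let e : Fin (Fintype.card L) ≃ L := g.toEquiv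
  have hmono : ∀ a b : L, a < b → e.symm a < e.symm b := by
    intro a b hab
    have h1 : toLinearExtension (α := L) a ≤ toLinearExtension b :=
      toLinearExtension.monotone hab.le
    have h2 : toLinearExtension (α := L) a ≠ toLinearExtension b := fun h => hab.ne h
    exact g.symm.strictMono (lt_of_le_of_ne h1 h2)
  have hnlt : ∀ j i : Fin (Fintype.card L), j < i → ¬ (e i < e j) := by
    intro j i hji h
    have := hmono _ _ h
    rw [Equiv.symm_apply_apply, Equiv.symm_apply_apply] at this
    exact absurd hji (not_lt_of_gt this)
  refine ⟨e, fun i => ?_⟩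
  refine ⟨{s | (X s : MvPolynomial _ F) ∈
    Submodule.colon (Ideal.span ((fun j => uMon F (e j)) '' {j | j < i}))
      (Ideal.span {uMon F (e i)})}, ?_⟩
  apply le_antisymm
  · intro f hf
    have hfu : f * uMon F (e i) ∈ Ideal.span ((fun j => uMon F (e j)) '' {j | j < i}) := by
      have := Submodule.mem_colon_span_singleton.1 hf
      rwa [smul_eq_mul] at this
    have himg : ((fun s => (X s : MvPolynomial _ F)) ''
        {s | (X s : MvPolynomial _ F) ∈
          Submodule.colon (Ideal.span ((fun j => uMon F (e j)) '' {j | j < i}))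
            (Ideal.span {uMon F (e i)})}) =
        (MvPolynomial.X '' {s | (X s : MvPolynomial _ F) ∈
          Submodule.colon (Ideal.span ((fun j => uMon F (e j)) '' {j | j < i}))
            (Ideal.span {uMon F (e i)})}) := rfl
    rw [himg, mem_ideal_span_X_image]
    intro μ hμ
    rw [span_image_eq F e i, mem_ideal_span_monomial_image] at hfu
    have hsupp : μ + E (e i) ∈ (f * uMon F (e i)).support := by
      rw [mem_support_iff, uMon_eq, coeff_mul_monomial, mul_one]
      exact mem_support_iff.1 hμ
    obtain ⟨ν, hν, hle⟩ := hfu (μ + E (e i)) hsupp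
    obtain ⟨j, hj, rfl⟩ := hν
    have hji : j < i := hj
    have hneq : e j ≠ e i := fun h => (ne_of_lt hji) (e.injective h)
    obtain ⟨z, p, hzc, hpq, hpr, hzl⟩ := forward_core hC hneq (hnlt j i hji)
    have hk : e.symm z < i := by
      have := hmono z (e i) hzc.lt
      rwa [Equiv.symm_apply_apply] at this
    refine ⟨Sum.inr p, ?_, ?_⟩
    · simp only [Set.mem_setOf_eq]
      apply Submodule.mem_colon_span_singleton.2
      rw [smul_eq_mul]
      have hXu : (X (Sum.inr p) : MvPolynomial _ F) * uMon F (e i) =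
          monomial (Finsupp.single (Sum.inr p) 1 + E (e i)) 1 := by
        rw [uMon_eq, X, monomial_mul, one_mul]
      rw [hXu, span_image_eq F e i, mem_ideal_span_monomial_image]
      intro ν' hν'
      have : ν' = Finsupp.single (Sum.inr p) 1 + E (e i) := by
        rw [support_monomial, if_neg one_ne_zero] at hν'
        exact Finset.mem_singleton.1 hν'
      subst this
      refine ⟨E (e (e.symm z)), ⟨e.symm z, hk, rfl⟩, ?_⟩
      rw [Equiv.apply_symm_apply]
      exact E_le_inr hpq hzl
    · rw [Finsupp.le_def] at hle
      have h1 := hle (Sum.inr p)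
      rw [Finsupp.add_apply, E_inr, E_inr, if_neg (fun h => hpr (mem_lset.2 h)),
        if_pos (mem_lset.1 hpq), add_zero] at h1
      omega
  · rw [Ideal.span_le]
    rintro gq ⟨s, hs, rfl⟩
    exact hs

lemma hasLinearQuotients_coversAddOne (h : HasLinearQuotientsHL L F) : CoversAddOne L := by
  classical
  obtain ⟨e, hT⟩ := h
  have key : ∀ i j : Fin (Fintype.card L), j < i →
      ∃ (k : Fin (Fintype.card L)) (p : {p : L // JoinIrred p}), k < i ∧
        ((p ∉ lset (e i) ∧ p ∈ lset (e j) ∧ lset (e k) = insert p (lset (e i))) ∨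
         (p ∈ lset (e i) ∧ p ∉ lset (e j) ∧ lset (e k) = lset (e i) \ {p})) := by
    intro i j hji
    obtain ⟨T, hTi⟩ := hT i
    set μ : ({p : L // JoinIrred p} ⊕ {p : L // JoinIrred p}) →₀ ℕ :=
      E (e j) - E (e i) with hμdef
    have hmcolon : (monomial μ (1 : F)) ∈
        Submodule.colon (Ideal.span ((fun j => uMon F (e j)) '' {j | j < i}))
          (Ideal.span {uMon F (e i)}) := by
      apply Submodule.mem_colon_span_singleton.2
      rw [smul_eq_mul, uMon_eq, monomial_mul, one_mul]
      rw [span_image_eq F e i, mem_ideal_span_monomial_image]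
      intro ν hν
      have : ν = μ + E (e i) := by
        rw [support_monomial, if_neg one_ne_zero] at hν
        exact Finset.mem_singleton.1 hν
      subst this
      refine ⟨E (e j), ⟨j, hji, rfl⟩, ?_⟩
      rw [Finsupp.le_def]
      intro t
      rw [Finsupp.add_apply, hμdef, Finsupp.tsub_apply]
      exact le_tsub_add
    rw [hTi] at hmcolon
    have himg : ((fun s => (X s : MvPolynomial _ F)) '' T) = (MvPolynomial.X '' T) := rfl
    rw [himg, mem_ideal_span_X_image] at hmcolon
    obtain ⟨s, hsT, hμs⟩ := hmcolon μ (monomial_mem_supp F μ)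
    have hXs : (X s : MvPolynomial _ F) ∈
        Ideal.span ((fun s => (X s : MvPolynomial _ F)) '' T) :=
      Ideal.subset_span ⟨s, hsT, rfl⟩
    rw [← hTi] at hXs
    have hXu : (X s : MvPolynomial _ F) * uMon F (e i) ∈
        Ideal.span ((fun j => uMon F (e j)) '' {j | j < i}) := by
      have := Submodule.mem_colon_span_singleton.1 hXs
      rwa [smul_eq_mul] at this
    rw [show (X s : MvPolynomial _ F) * uMon F (e i) =
        monomial (Finsupp.single s 1 + E (e i)) 1 from by
      rw [uMon_eq, X, monomial_mul, one_mul]] at hXu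
    rw [span_image_eq F e i, mem_ideal_span_monomial_image] at hXu
    obtain ⟨ν, hν, hle⟩ := hXu (Finsupp.single s 1 + E (e i)) (monomial_mem_supp F _)
    obtain ⟨k, hk, rfl⟩ := hν
    have hki : k < i := hk
    have hne : e k ≠ e i := fun hh => (ne_of_lt hki) (e.injective hh)
    rcases Eflip hle hne with ⟨p, rfl, h1, h2⟩ | ⟨p, rfl, h1, h2⟩
    · refine ⟨k, p, hki, Or.inl ⟨h1, ?_, h2⟩⟩
      by_contra hpj
      rw [hμdef, Finsupp.tsub_apply, E_inl, if_neg (fun hh => hpj (mem_lset.2 hh))] at hμs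
      simp at hμs
    · refine ⟨k, p, hki, Or.inr ⟨h1, ?_, h2⟩⟩
      by_contra hpj
      rw [hμdef, Finsupp.tsub_apply, E_inr, if_pos (mem_lset.1 hpj)] at hμs
      simp at hμs
  intro z y hzy
  have hys : e (e.symm y) = y := e.apply_symm_apply y
  have hzs : e (e.symm z) = z := e.apply_symm_apply z
  have hne : e.symm y ≠ e.symm z := fun hh => hzy.ne (by rw [← hzs, ← hh, hys])
  rcases lt_or_gt_of_ne hne with hlt | hlt
  · obtain ⟨k, p, hk, hcase⟩ := key (e.symm z) (e.symm y) hlt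
    rw [hys, hzs] at hcase
    rcases hcase with ⟨h1, h2, h3⟩ | ⟨h1, h2, h3⟩
    · have hzk : z < e k := by
        refine lt_of_le_of_ne (le_iff_lset.2 (h3 ▸ Set.subset_insert _ _)) (fun hh => ?_)
        exact h1 (hh ▸ (h3 ▸ Set.mem_insert _ _ : p ∈ lset (e k)))
      have hky : e k ≤ y := le_iff_lset.2 (by
        rw [h3]; exact Set.insert_subset h2 (lset_mono hzy.le))
      rcases eq_or_lt_of_le hky with hh | hh
      · exact ⟨p, h1, by rw [← hh, h3]⟩
      · exact absurd hh (hzy.2 hzk)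
    · exact absurd (lset_mono hzy.le h1) h2
  · obtain ⟨k, p, hk, hcase⟩ := key (e.symm y) (e.symm z) hlt
    rw [hys, hzs] at hcase
    rcases hcase with ⟨h1, h2, h3⟩ | ⟨h1, h2, h3⟩
    · exact absurd (lset_mono hzy.le h2) h1
    · have hzk : z ≤ e k := le_iff_lset.2 (by
        rw [h3]
        exact fun r hr => ⟨lset_mono hzy.le hr,
          fun hs => h2 (Set.mem_singleton_iff.1 hs ▸ hr)⟩)
      have hky : e k < y := by
        refine lt_of_le_of_ne (le_iff_lset.2 (h3 ▸ Set.diff_subset)) (fun hh => ?_)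
        have : p ∈ lset (e k) := hh ▸ h1
        rw [h3] at this
        exact this.2 rfl
      rcases eq_or_lt_of_le hzk with hh | hh
      · refine ⟨p, h2, ?_⟩
        rw [← hh] at h3
        rw [h3, Set.insert_diff_singleton, Set.insert_eq_self.2 h1]
      · exact absurd hky (hzy.2 hh)

end Alg

end HLaux


/-- Theorem 1.3 (i) ⇔ (ii): a finite meet-semilattice `L` is meet-distributive
if and only if `H_L` has linear quotients. -/
theorem stmt2 {L : Type*} [Fintype L] [SemilatticeInf L] (F : Type*) [Field F] :
    MeetDistributive L ↔ HasLinearQuotientsHL L F := by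
  constructor
  · intro h
    exact HLaux.coversAddOne_hasLinearQuotients F (HLaux.meetDistributive_coversAddOne h)
  · intro h
    exact HLaux.coversAddOne_meetDistributive (HLaux.hasLinearQuotients_coversAddOne F h)
end

section
/- Let L be a finite meet-semilattice and fix a linear order ≺ on L extending the partial order given by degree (i.e., if deg r < deg p then r ≺ p). Then for every p ∈ L the colon ideal ({u_q : q ≺ p}) : u_p in S equals the ideal generated by the monomials u_t/gcd(u_t, u_p) = ∏_{r ∈ ℓ(p)∖ℓ(t)} y_r, where t ranges over the set N(p) of lower neighbors of p in L. -/
open MvPolynomial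

open Classical in
/-- The monomial `u_t / gcd(u_t, u_p) = ∏_{r ∈ ℓ(p)∖ℓ(t)} y_r`. -/
noncomputable def yQuot {L : Type*} [Preorder L] [Fintype L] (F : Type*) [Field F] (p t : L) :
    MvPolynomial ({p : L // JoinIrred p} ⊕ {p : L // JoinIrred p}) F :=
  ∏ r : {p : L // JoinIrred p},
    if (r : L) ≤ p ∧ ¬ (r : L) ≤ t then X (Sum.inr r) else 1

section Aux

variable {L : Type*}

/-- Every element of a finite meet-semilattice is the LUB of the join-irreducibles below it. -/
lemma isLUB_ell [Fintype L] [SemilatticeInf L] (q : L) :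
    IsLUB {r : L | JoinIrred r ∧ r ≤ q} q := by
  induction q using WellFoundedLT.induction with
  | ind q IH =>
    by_cases hq : JoinIrred q
    · exact IsGreatest.isLUB ⟨⟨hq, le_refl q⟩, fun r hr => hr.2⟩
    · rw [JoinIrred, not_not] at hq
      refine ⟨fun r hr => hr.2, fun b hb => ?_⟩
      refine hq.2 (fun r hr => ?_)
      exact (IH r hr).2 (fun s hs => hb ⟨hs.1, hs.2.trans (le_of_lt hr)⟩)

lemma degL_lt_of_lt [Fintype L] [SemilatticeInf L] {s p : L} (h : s < p) : degL s < degL p := by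
  have hsub : {r : L | JoinIrred r ∧ r ≤ s} ⊂ {r : L | JoinIrred r ∧ r ≤ p} := by
    refine ⟨fun r hr => ⟨hr.1, hr.2.trans h.le⟩, fun hsup => ?_⟩
    exact absurd ((isLUB_ell p).2 (fun r hr => (hsup hr).2)) (not_le_of_gt h)
  have hlt := Set.ncard_lt_ncard hsub (Set.toFinite _)
  rw [← Nat.card_coe_set_eq, ← Nat.card_coe_set_eq] at hlt
  exact hlt

open Classical in
/-- The exponent vector of `uMon`. -/
noncomputable def dU [Preorder L] [Fintype L] (q : L) :
    ({p : L // JoinIrred p} ⊕ {p : L // JoinIrred p}) →₀ ℕ :=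
  Finsupp.equivFunOnFinite.symm (fun i =>
    Sum.elim (fun r : {p : L // JoinIrred p} => if (r : L) ≤ q then 1 else 0)
      (fun r : {p : L // JoinIrred p} => if (r : L) ≤ q then 0 else 1) i)

open Classical in
/-- The exponent vector of `yQuot`. -/
noncomputable def dY [Preorder L] [Fintype L] (p t : L) :
    ({p : L // JoinIrred p} ⊕ {p : L // JoinIrred p}) →₀ ℕ :=
  Finsupp.equivFunOnFinite.symm (fun i =>
    Sum.elim (fun _ : {p : L // JoinIrred p} => 0)
      (fun r : {p : L // JoinIrred p} => if (r : L) ≤ p ∧ ¬ (r : L) ≤ t then 1 else 0) i)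

open Classical in
lemma dU_apply_inl [Preorder L] [Fintype L] (q : L) (r : {p : L // JoinIrred p}) :
    dU q (Sum.inl r) = if (r : L) ≤ q then 1 else 0 := by
  simp [dU]

open Classical in
lemma dU_apply_inr [Preorder L] [Fintype L] (q : L) (r : {p : L // JoinIrred p}) :
    dU q (Sum.inr r) = if (r : L) ≤ q then 0 else 1 := by
  simp [dU]

open Classical in
lemma dY_apply_inl [Preorder L] [Fintype L] (p t : L) (r : {p : L // JoinIrred p}) :
    dY p t (Sum.inl r) = 0 := by
  simp [dY]

open Classical in
lemma dY_apply_inr [Preorder L] [Fintype L] (p t : L) (r : {p : L // JoinIrred p}) :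
    dY p t (Sum.inr r) = if (r : L) ≤ p ∧ ¬ (r : L) ≤ t then 1 else 0 := by
  simp [dY]

lemma prod_monomial_one {ι σ R : Type*} [CommSemiring R] (s : Finset ι) (d : ι → (σ →₀ ℕ)) :
    ∏ i ∈ s, MvPolynomial.monomial (d i) (1 : R) =
      MvPolynomial.monomial (∑ i ∈ s, d i) 1 := by
  classical
  induction s using Finset.induction with
  | empty => simp
  | insert _ _ h ih =>
      rw [Finset.prod_insert h, Finset.sum_insert h, ih, MvPolynomial.monomial_mul, one_mul]

open Classical in
lemma uMon_eq_monomial [Preorder L] [Fintype L] (F : Type*) [Field F] (q : L) :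
    uMon F q = MvPolynomial.monomial (dU q) (1 : F) := by
  have h1 : uMon F q = ∏ r : {p : L // JoinIrred p},
      MvPolynomial.monomial
        (if (r : L) ≤ q then Finsupp.single (Sum.inl r) 1 else Finsupp.single (Sum.inr r) 1)
        (1 : F) := by
    refine Finset.prod_congr rfl (fun r _ => ?_)
    split_ifs with h <;> simp [MvPolynomial.X, h]
  rw [h1, prod_monomial_one]
  refine congrArg (fun d => MvPolynomial.monomial d (1 : F)) ?_
  ext i
  rw [Finsupp.finset_sum_apply]
  cases i with
  | inl s =>
      rw [dU_apply_inl]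
      rw [Finset.sum_eq_single s]
      · split_ifs with h <;> simp [Finsupp.single_apply, h]
      · intro b _ hbs
        split_ifs with h <;> simp [Finsupp.single_apply, Sum.inl.injEq, hbs]
      · simp
  | inr s =>
      rw [dU_apply_inr]
      rw [Finset.sum_eq_single s]
      · split_ifs with h <;> simp [Finsupp.single_apply, h]
      · intro b _ hbs
        split_ifs with h <;> simp [Finsupp.single_apply, Sum.inr.injEq, hbs]
      · simp

open Classical in
lemma yQuot_eq_monomial [Preorder L] [Fintype L] (F : Type*) [Field F] (p t : L) :
    yQuot F p t = MvPolynomial.monomial (dY p t) (1 : F) := by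
  have h1 : yQuot F p t = ∏ r : {p : L // JoinIrred p},
      MvPolynomial.monomial
        (if (r : L) ≤ p ∧ ¬ (r : L) ≤ t then Finsupp.single (Sum.inr r) 1 else 0)
        (1 : F) := by
    refine Finset.prod_congr rfl (fun r _ => ?_)
    split_ifs with h <;> simp [MvPolynomial.X, h]
  rw [h1, prod_monomial_one]
  refine congrArg (fun d => MvPolynomial.monomial d (1 : F)) ?_
  ext i
  rw [Finsupp.finset_sum_apply]
  cases i with
  | inl s =>
      rw [dY_apply_inl]
      refine Finset.sum_eq_zero (fun b _ => ?_)
      split_ifs with h <;> simp [Finsupp.single_apply]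
  | inr s =>
      rw [dY_apply_inr]
      rw [Finset.sum_eq_single s]
      · split_ifs with h <;> simp [Finsupp.single_apply, h]
      · intro b _ hbs
        split_ifs with h <;> simp [Finsupp.single_apply, Sum.inr.injEq, hbs]
      · simp

end Aux

/-- Key colon-ideal computation in Theorems 1.3 and 2.1: if `≺` is a linear order on `L`
(here encoded by an injection `f : L → ℕ`) extending the partial order given by degree,
then for every `p ∈ L` one has
`({u_q : q ≺ p}) : u_p = (u_t/gcd(u_t,u_p) : t ∈ N(p)) = (∏_{r ∈ ℓ(p)∖ℓ(t)} y_r : t ⋖ p)`. -/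
theorem stmt3 {L : Type*} [Fintype L] [SemilatticeInf L] (F : Type*) [Field F]
    (f : L → ℕ) (hf : Function.Injective f)
    (hdeg : ∀ r p : L, degL r < degL p → f r < f p) (p : L) :
    Submodule.colon (Ideal.span {u | ∃ q : L, f q < f p ∧ u = uMon F q})
        (Ideal.span {uMon F p}) =
      Ideal.span {m | ∃ t : L, t ⋖ p ∧ m = yQuot F p t} := by
  classical
  have hflt : ∀ {s : L}, s < p → f s < f p := fun {s} hs =>
    hdeg _ _ (degL_lt_of_lt hs)
  -- rewrite the two generating sets as images of `monomial · 1`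
  have hset1 : {u | ∃ q : L, f q < f p ∧ u = uMon F q} =
      (fun s => MvPolynomial.monomial s (1 : F)) '' {d | ∃ q : L, f q < f p ∧ d = dU q} := by
    ext u
    constructor
    · rintro ⟨q, hq, rfl⟩
      exact ⟨dU q, ⟨q, hq, rfl⟩, (uMon_eq_monomial F q).symm⟩
    · rintro ⟨d, ⟨q, hq, rfl⟩, rfl⟩
      exact ⟨q, hq, (uMon_eq_monomial F q).symm ▸ rfl⟩
  have hset2 : {m | ∃ t : L, t ⋖ p ∧ m = yQuot F p t} =
      (fun s => MvPolynomial.monomial s (1 : F)) '' {d | ∃ t : L, t ⋖ p ∧ d = dY p t} := by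
    ext u
    constructor
    · rintro ⟨t, ht, rfl⟩
      exact ⟨dY p t, ⟨t, ht, rfl⟩, (yQuot_eq_monomial F p t).symm⟩
    · rintro ⟨d, ⟨t, ht, rfl⟩, rfl⟩
      exact ⟨t, ht, (yQuot_eq_monomial F p t).symm ▸ rfl⟩
  ext g
  rw [Ideal.mem_colon_span_singleton, hset1, hset2, mem_ideal_span_monomial_image,
    mem_ideal_span_monomial_image, uMon_eq_monomial]
  constructor
  · -- colon ⊆ span of the yQuot's
    intro h m hm
    have hmem : m + dU p ∈ (g * MvPolynomial.monomial (dU p) (1 : F)).support := by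
      rw [MvPolynomial.mem_support_iff, MvPolynomial.coeff_mul_monomial, mul_one]
      exact MvPolynomial.mem_support_iff.mp hm
    obtain ⟨d, ⟨q, hq, rfl⟩, hle⟩ := h _ hmem
    have hpq : ¬ p ≤ q := by
      intro hpq
      rcases eq_or_lt_of_le hpq with rfl | hlt
      · exact lt_irrefl _ hq
      · exact Nat.lt_asymm hq (hdeg _ _ (degL_lt_of_lt hlt))
    have hs : p ⊓ q < p := inf_lt_left.mpr hpq
    obtain ⟨t, hst, htp⟩ := exists_le_covBy_of_lt hs
    refine ⟨dY p t, ⟨t, htp, rfl⟩, ?_⟩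
    intro i
    cases i with
    | inl r => simp [dY_apply_inl]
    | inr r =>
        rw [dY_apply_inr]
        split_ifs with hc
        · obtain ⟨hrp, hrt⟩ := hc
          have hrq : ¬ (r : L) ≤ q := fun hrq =>
            hrt ((le_inf hrp hrq).trans hst)
          have h1 := hle (Sum.inr r)
          rw [Finsupp.add_apply, dU_apply_inr, dU_apply_inr, if_neg hrq, if_pos hrp,
            add_zero] at h1
          exact h1
        · exact Nat.zero_le _
  · -- span of the yQuot's ⊆ colon
    intro h m hm
    rw [MvPolynomial.mem_support_iff, MvPolynomial.coeff_mul_monomial'] at hm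
    split_ifs at hm with hdm
    · have hm' : m - dU p ∈ g.support := by
        rw [MvPolynomial.mem_support_iff]
        intro h0
        rw [h0, zero_mul] at hm
        exact hm rfl
      obtain ⟨d, ⟨t, htp, rfl⟩, hle⟩ := h _ hm'
      refine ⟨dU t, ⟨t, hflt htp.lt, rfl⟩, ?_⟩
      have hkey : dU t ≤ dY p t + dU p := by
        intro i
        cases i with
        | inl r =>
            simp only [Finsupp.add_apply, dU_apply_inl, dY_apply_inl]
            by_cases hrt : (r : L) ≤ t
            · simp [hrt, hrt.trans htp.lt.le]
            · simp [hrt]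
        | inr r =>
            simp only [Finsupp.add_apply, dU_apply_inr, dY_apply_inr]
            by_cases hrt : (r : L) ≤ t
            · simp [hrt]
            · by_cases hrp : (r : L) ≤ p
              · simp [hrt, hrp]
              · simp [hrt, hrp]
      calc dU t ≤ dY p t + dU p := hkey
        _ ≤ (m - dU p) + dU p := add_le_add_left hle _
        _ = m := tsub_add_cancel_of_le hdm
    · exact absurd rfl hm
end

section
/- Let L be a finite lattice with at least two elements. Then the height of the ideal H_L equals 2. -/
open MvPolynomial

/-- The *height* of an ideal: the minimum of the heights of its minimal prime ideals, the
height of a prime being its height as an element of the prime spectrum (the maximal length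
of chains of primes descending from it). -/
noncomputable def idealHeight {R : Type*} [CommRing R] (I : Ideal R) : ℕ∞ :=
  ⨅ P : {P : PrimeSpectrum R // P.asIdeal ∈ I.minimalPrimes}, Order.height P.1

/-! ### Auxiliary lemmas -/

section Helpers
variable {R S : Type*} [CommRing R] [CommRing S]

theorem HLaux.comap_equiv_ne_bot (E : R ≃+* S) {q : Ideal S} (hb : q ≠ ⊥) :
    Ideal.comap E q ≠ ⊥ := by
  intro h
  apply hb
  ext y
  simp only [Ideal.mem_bot]
  constructor
  · intro hy
    have h1 : E.symm y ∈ Ideal.comap E q := by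
      rw [Ideal.mem_comap, E.apply_symm_apply]; exact hy
    rw [h, Ideal.mem_bot] at h1
    have h2 := congrArg E h1
    rwa [E.apply_symm_apply, map_zero] at h2
  · rintro rfl; exact q.zero_mem

theorem HLaux.comap_equiv_lt (E : R ≃+* S) {q1 q2 : Ideal S} (h12 : q1 < q2) :
    Ideal.comap E q1 < Ideal.comap E q2 := by
  constructor
  · exact Ideal.comap_mono h12.le
  · intro hle
    apply h12.ne
    apply le_antisymm h12.le
    intro y hy
    have h1 : E.symm y ∈ Ideal.comap E q2 := by
      rw [Ideal.mem_comap, E.apply_symm_apply]; exact hy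
    have h3 : E.symm y ∈ Ideal.comap E q1 := hle h1
    rw [Ideal.mem_comap, E.apply_symm_apply] at h3
    exact h3

end Helpers

section CoreField
open Polynomial

variable {K : Type*} [Field K]

/-- In `K[x][y]`, if `⊥ ≠ q1 < q2` are primes then `q2` contains a nonzero
constant (an element of `K[x]`). -/
theorem HLaux.L1T (q1 q2 : Ideal (Polynomial (Polynomial K)))
    (h1 : q1.IsPrime) (h2 : q2.IsPrime) (hb : q1 ≠ ⊥) (h12 : q1 < q2) :
    ∃ u : Polynomial K, u ≠ 0 ∧ Polynomial.C u ∈ q2 := by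
  classical
  obtain ⟨f, hfq1, hf0⟩ : ∃ f ∈ q1, f ≠ 0 := by
    by_contra h
    push_neg at h
    exact hb (le_antisymm (fun x hx => (Ideal.mem_bot).2 (h x hx)) bot_le)
  have hfu : ¬ IsUnit f := fun hu => h1.ne_top (Ideal.eq_top_of_isUnit_mem _ hfq1 hu)
  obtain ⟨π, hπf, hπq1⟩ : ∃ π ∈ UniqueFactorizationMonoid.factors f, π ∈ q1 := by
    obtain ⟨u, hu⟩ := UniqueFactorizationMonoid.factors_prod hf0
    have : (UniqueFactorizationMonoid.factors f).prod ∈ q1 := by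
      have : f * ↑u⁻¹ ∈ q1 := Ideal.mul_mem_right _ _ hfq1
      rwa [← hu, mul_assoc, Units.mul_inv, mul_one] at this
    exact (h1.multiset_prod_mem_iff_exists_mem _).1 this
  have hπ : Prime π := UniqueFactorizationMonoid.prime_of_factor _ hπf
  obtain ⟨g, hgq2, hgq1⟩ : ∃ g ∈ q2, g ∉ q1 := SetLike.exists_of_lt h12
  by_cases hd : π.natDegree = 0
  · obtain ⟨a, ha⟩ := Polynomial.natDegree_eq_zero.1 hd
    refine ⟨a, ?_, ?_⟩
    · rintro rfl; rw [map_zero] at ha; exact hπ.ne_zero ha.symm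
    · rw [ha]; exact h12.le hπq1
  · set Kx := Polynomial K
    set L := FractionRing Kx
    have hπ0 : π ≠ 0 := hπ.ne_zero
    have hprim : π.IsPrimitive := by
      intro r hr
      obtain ⟨t, ht⟩ := hr
      rcases hπ.irreducible.isUnit_or_isUnit ht with h | h
      · exact Polynomial.isUnit_C.mp h
      · exfalso
        obtain ⟨r', hr', hCr'⟩ := Polynomial.isUnit_iff.mp h
        exact hd (by rw [ht, ← hCr', ← Polynomial.C_mul, Polynomial.natDegree_C])
    have hirr : Irreducible (π.map (algebraMap Kx L)) :=
      (hprim.irreducible_iff_irreducible_map_fraction_map (K := L)).mp hπ.irreducible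
    have hg0 : g ≠ 0 := fun h => hgq1 (h ▸ q1.zero_mem)
    have hndvd : ¬ (π.map (algebraMap Kx L) ∣ g.map (algebraMap Kx L)) := by
      intro hdvd
      have hcont : g.content ≠ 0 := fun h => hg0 (Polynomial.content_eq_zero_iff.mp h)
      have hunit : IsUnit (Polynomial.C (algebraMap Kx L g.content)) :=
        Polynomial.isUnit_C.mpr ((isUnit_iff_ne_zero).mpr
          (fun h => hcont ((map_eq_zero_iff _ (IsFractionRing.injective Kx L)).mp h)))
      have hdvd' : π.map (algebraMap Kx L) ∣ g.primPart.map (algebraMap Kx L) := by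
        have := hdvd
        conv at this in g.map _ => rw [g.eq_C_content_mul_primPart]
        rw [Polynomial.map_mul, Polynomial.map_C] at this
        exact (IsUnit.dvd_mul_left hunit).mp this
      have : π ∣ g.primPart :=
        ((hprim.dvd_iff_fraction_map_dvd_fraction_map L (q := g.primPart))).mpr hdvd'
      obtain ⟨t, rfl⟩ := this.trans g.primPart_dvd
      exact hgq1 (Ideal.mul_mem_right _ _ hπq1)
    obtain ⟨a, b, hab⟩ := (hirr.coprime_iff_not_dvd).mpr hndvd
    obtain ⟨ma, hma⟩ := IsLocalization.integerNormalization_map_to_map (nonZeroDivisors Kx) a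
    obtain ⟨mb, hmb⟩ := IsLocalization.integerNormalization_map_to_map (nonZeroDivisors Kx) b
    set Na := IsLocalization.integerNormalization (nonZeroDivisors Kx) a
    set Nb := IsLocalization.integerNormalization (nonZeroDivisors Kx) b
    have key : Na * Polynomial.C (mb : Kx) * π + Nb * Polynomial.C (ma : Kx) * g
        = Polynomial.C ((ma : Kx) * (mb : Kx)) := by
      apply Polynomial.map_injective (algebraMap Kx L) (IsFractionRing.injective Kx L)
      have hsmul : ∀ (m : Kx) (p : Polynomial L),
          m • p = Polynomial.C (algebraMap Kx L m) * p := by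
        intro m p
        rw [Algebra.smul_def, IsScalarTower.algebraMap_apply Kx L (Polynomial L)]
        rfl
      rw [Polynomial.map_add, Polynomial.map_mul, Polynomial.map_mul, Polynomial.map_mul,
        Polynomial.map_mul, Polynomial.map_C, Polynomial.map_C, Polynomial.map_C, hma, hmb,
        hsmul, hsmul, map_mul, Polynomial.C_mul]
      linear_combination (Polynomial.C (algebraMap Kx L (ma : Kx)) *
        Polynomial.C (algebraMap Kx L (mb : Kx))) * hab
    have hmem : Polynomial.C ((ma : Kx) * (mb : Kx)) ∈ q2 := by
      rw [← key]
      exact Ideal.add_mem _ (Ideal.mul_mem_left _ _ (h12.le hπq1)) (Ideal.mul_mem_left _ _ hgq2)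
    exact ⟨(ma : Kx) * (mb : Kx), mul_ne_zero (nonZeroDivisors.ne_zero ma.2)
      (nonZeroDivisors.ne_zero mb.2), hmem⟩

/-- The algebra equivalence `MvPolynomial (Option Unit) K ≃ K[x][y]`
with `X (some ()) ↦ C X` and `X none ↦ X`. -/
noncomputable def HLaux.EOU (K : Type*) [Field K] :
    MvPolynomial (Option Unit) K ≃ₐ[K] Polynomial (Polynomial K) :=
  (MvPolynomial.optionEquivLeft K Unit).trans
    (Polynomial.mapAlgEquiv (MvPolynomial.pUnitAlgEquiv K))

theorem HLaux.L2a (q1 q2 : Ideal (MvPolynomial (Option Unit) K))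
    (h1 : q1.IsPrime) (h2 : q2.IsPrime) (hb : q1 ≠ ⊥) (h12 : q1 < q2) :
    ∃ u : Polynomial K, u ≠ 0 ∧
      Polynomial.aeval (MvPolynomial.X (some ()) : MvPolynomial (Option Unit) K) u ∈ q2 := by
  classical
  set E := HLaux.EOU K
  set q1' : Ideal (Polynomial (Polynomial K)) := Ideal.comap E.symm q1 with hq1'
  set q2' : Ideal (Polynomial (Polynomial K)) := Ideal.comap E.symm q2 with hq2'
  have h1' : q1'.IsPrime := Ideal.comap_isPrime _ _
  have h2' : q2'.IsPrime := Ideal.comap_isPrime _ _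
  have hb' : q1' ≠ ⊥ := HLaux.comap_equiv_ne_bot E.symm.toRingEquiv hb
  have h12' : q1' < q2' := HLaux.comap_equiv_lt E.symm.toRingEquiv h12
  obtain ⟨u, hu0, humem⟩ := HLaux.L1T q1' q2' h1' h2' hb' h12'
  refine ⟨u, hu0, ?_⟩
  have hx : E.symm ((Polynomial.C Polynomial.X : Polynomial (Polynomial K)))
      = MvPolynomial.X (some ()) := by
    have h : E (MvPolynomial.X (some ())) = Polynomial.C Polynomial.X := by
      simp [E, HLaux.EOU, MvPolynomial.optionEquivLeft_X_some]
    rw [← h, AlgEquiv.symm_apply_apply]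
  have key : E.symm (Polynomial.C u) =
      Polynomial.aeval (MvPolynomial.X (some ()) : MvPolynomial (Option Unit) K) u := by
    have h1 : (Polynomial.C u : Polynomial (Polynomial K)) =
        Polynomial.aeval (Polynomial.C Polynomial.X : Polynomial (Polynomial K)) u := by
      rw [show (Polynomial.C Polynomial.X : Polynomial (Polynomial K)) =
        (IsScalarTower.toAlgHom K (Polynomial K) (Polynomial (Polynomial K))) Polynomial.X from
          by simp [Polynomial.algebraMap_eq],
        Polynomial.aeval_algHom_apply, Polynomial.aeval_X_left_apply]
      simp [Polynomial.algebraMap_eq]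
    rw [h1, ← Polynomial.aeval_algHom_apply E.symm
      (Polynomial.C Polynomial.X : Polynomial (Polynomial K)) u, hx]
  rw [← key]
  exact humem

theorem HLaux.L2b (q1 q2 : Ideal (MvPolynomial (Option Unit) K))
    (h1 : q1.IsPrime) (h2 : q2.IsPrime) (hb : q1 ≠ ⊥) (h12 : q1 < q2) :
    ∃ u : Polynomial K, u ≠ 0 ∧
      Polynomial.aeval (MvPolynomial.X none : MvPolynomial (Option Unit) K) u ∈ q2 := by
  classical
  set s : MvPolynomial (Option Unit) K ≃ₐ[K] MvPolynomial (Option Unit) K :=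
    MvPolynomial.renameEquiv K (Equiv.swap none (some ()))
  set r1 := Ideal.comap s.toRingEquiv q1 with hr1
  set r2 := Ideal.comap s.toRingEquiv q2 with hr2
  obtain ⟨u, hu0, hum⟩ := HLaux.L2a r1 r2 (Ideal.comap_isPrime _ _) (Ideal.comap_isPrime _ _)
    (HLaux.comap_equiv_ne_bot _ hb) (HLaux.comap_equiv_lt _ h12)
  refine ⟨u, hu0, ?_⟩
  have hm : s (Polynomial.aeval
      (MvPolynomial.X (some ()) : MvPolynomial (Option Unit) K) u) ∈ q2 := hum
  rwa [← Polynomial.aeval_algHom_apply (s : MvPolynomial (Option Unit) K ≃ₐ[K] _)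
      (MvPolynomial.X (some ())) u,
    show s (MvPolynomial.X (some ())) = MvPolynomial.X none from by
      simp [s, Equiv.swap_apply_right]] at hm

theorem HLaux.L2 (q1 q2 : Ideal (MvPolynomial (Option Unit) K))
    (h1 : q1.IsPrime) (h2 : q2.IsPrime) (hb : q1 ≠ ⊥) (h12 : q1 < q2) : q2.IsMaximal := by
  classical
  obtain ⟨u, hu0, hum⟩ := HLaux.L2a q1 q2 h1 h2 hb h12
  obtain ⟨v, hv0, hvm⟩ := HLaux.L2b q1 q2 h1 h2 hb h12
  rw [Ideal.Quotient.maximal_ideal_iff_isField_quotient]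
  haveI := h2
  set Q := MvPolynomial (Option Unit) K ⧸ q2
  have hXint : ∀ i : Option Unit, IsIntegral K (Ideal.Quotient.mk q2 (MvPolynomial.X i)) := by
    intro i
    have key : ∀ (w : Polynomial K), w ≠ 0 →
        Polynomial.aeval (MvPolynomial.X i : MvPolynomial (Option Unit) K) w ∈ q2 →
        IsIntegral K (Ideal.Quotient.mk q2 (MvPolynomial.X i)) := by
      intro w hw0 hwm
      have : IsAlgebraic K (Ideal.Quotient.mk q2 (MvPolynomial.X i)) := by
        refine ⟨w, hw0, ?_⟩
        have h0 : (Ideal.Quotient.mkₐ K q2) (Polynomial.aeval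
            (MvPolynomial.X i : MvPolynomial (Option Unit) K) w) = 0 := by
          rw [Ideal.Quotient.mkₐ_eq_mk, Ideal.Quotient.eq_zero_iff_mem]
          exact hwm
        rwa [← Polynomial.aeval_algHom_apply (Ideal.Quotient.mkₐ K q2)
          (MvPolynomial.X i) w, Ideal.Quotient.mkₐ_eq_mk] at h0
      exact this.isIntegral
    cases i with
    | none => exact key v hv0 hvm
    | some x => cases x; exact key u hu0 hum
  have hint : ∀ z : MvPolynomial (Option Unit) K,
      IsIntegral K (Ideal.Quotient.mk q2 z) := by
    intro z
    induction z using MvPolynomial.induction_on with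
    | C a =>
      have : (Ideal.Quotient.mk q2) (MvPolynomial.C a) = algebraMap K Q a := rfl
      rw [this]
      exact isIntegral_algebraMap
    | add p q hp hq => rw [RingHom.map_add]; exact hp.add hq
    | mul_X p i hp => rw [RingHom.map_mul]; exact hp.mul (hXint i)
  haveI : Algebra.IsIntegral K Q := ⟨fun z => by
    obtain ⟨p, rfl⟩ := Ideal.Quotient.mk_surjective z
    exact hint p⟩
  have hinj : Function.Injective (algebraMap K Q) := RingHom.injective _
  exact (Algebra.IsIntegral.isField_iff_isField hinj).mp (Field.toIsField K)

end CoreField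

section Localize
variable {A : Type*} [CommRing A] [IsDomain A]

theorem HLaux.L3 (p1 p2 p3 : Ideal (MvPolynomial (Option Unit) A))
    (hp1 : p1.IsPrime) (hp2 : p2.IsPrime) (hp3 : p3.IsPrime)
    (h12 : p1 < p2) (h23 : p2 < p3)
    (hM : p3 ≤ RingHom.ker
      (MvPolynomial.aeval (fun _ : Option Unit => (0:A)) : _ →ₐ[A] A).toRingHom) :
    p1 = ⊥ := by
  classical
  letI K := FractionRing A
  letI : Algebra (MvPolynomial (Option Unit) A) (MvPolynomial (Option Unit) K) :=
    MvPolynomial.algebraMvPolynomial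
  set W : Submonoid (MvPolynomial (Option Unit) A) :=
    (nonZeroDivisors A).map (MvPolynomial.C (σ := Option Unit)) with hW
  haveI hloc : IsLocalization W (MvPolynomial (Option Unit) K) :=
    MvPolynomial.isLocalization _ _
  have hdisj : ∀ p : Ideal (MvPolynomial (Option Unit) A), p ≤ p3 →
      Disjoint (W : Set (MvPolynomial (Option Unit) A)) (p : Set _) := by
    intro p hle
    rw [Set.disjoint_left]
    rintro x ⟨m, hm, rfl⟩ hxp
    have h0 : (MvPolynomial.aeval (fun _ : Option Unit => (0:A)))
        (MvPolynomial.C m) = 0 := hM (hle hxp)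
    rw [MvPolynomial.aeval_C] at h0
    exact nonZeroDivisors.ne_zero hm (by simpa using h0)
  set O := IsLocalization.orderIsoOfPrime W (MvPolynomial (Option Unit) K) with hO
  set e1 : {p : Ideal (MvPolynomial (Option Unit) A) //
      p.IsPrime ∧ Disjoint (W : Set (MvPolynomial (Option Unit) A))
        (p : Set (MvPolynomial (Option Unit) A))} := ⟨p1, hp1, hdisj _ (h12.le.trans h23.le)⟩
  set e2 : {p : Ideal (MvPolynomial (Option Unit) A) //
      p.IsPrime ∧ Disjoint (W : Set (MvPolynomial (Option Unit) A))
        (p : Set (MvPolynomial (Option Unit) A))} := ⟨p2, hp2, hdisj _ h23.le⟩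
  set e3 : {p : Ideal (MvPolynomial (Option Unit) A) //
      p.IsPrime ∧ Disjoint (W : Set (MvPolynomial (Option Unit) A))
        (p : Set (MvPolynomial (Option Unit) A))} := ⟨p3, hp3, hdisj _ le_rfl⟩
  set q1 := O.symm e1
  set q2 := O.symm e2
  set q3 := O.symm e3
  have hq12 : q1.1 < q2.1 := O.symm.lt_iff_lt.mpr (Subtype.mk_lt_mk.mpr h12)
  have hq23 : q2.1 < q3.1 := O.symm.lt_iff_lt.mpr (Subtype.mk_lt_mk.mpr h23)
  have hq1bot : q1.1 = ⊥ := by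
    by_contra hne
    have hmax : q2.1.IsMaximal := HLaux.L2 q1.1 q2.1 q1.2 q2.2 hne hq12
    exact q3.2.ne_top (hmax.1.2 _ hq23)
  have happ : O q1 = e1 := O.apply_symm_apply e1
  have hval : (O q1).1 = Ideal.comap
      (algebraMap (MvPolynomial (Option Unit) A) (MvPolynomial (Option Unit) K)) q1.1 := rfl
  have hinj : Function.Injective
      (algebraMap (MvPolynomial (Option Unit) A) (MvPolynomial (Option Unit) K)) := by
    rw [MvPolynomial.algebraMap_def]
    exact MvPolynomial.map_injective _ (IsFractionRing.injective A K)
  have hp1eq : p1 = Ideal.comap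
      (algebraMap (MvPolynomial (Option Unit) A) (MvPolynomial (Option Unit) K)) q1.1 := by
    rw [← hval, happ]
  rw [hp1eq, hq1bot, ← RingHom.ker_eq_comap_bot,
    RingHom.injective_iff_ker_eq_bot _ |>.mp hinj]

end Localize

section SpanX
variable {F : Type*} [Field F] {σ : Type*}

/-- Substituting `X v ↦ 0` and fixing the other variables. -/
noncomputable def HLaux.psi (F : Type*) [Field F] {σ : Type*} [DecidableEq σ] (v : σ) :
    MvPolynomial σ F →ₐ[F] MvPolynomial σ F :=
  MvPolynomial.aeval (fun w => if w = v then 0 else MvPolynomial.X w)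

theorem HLaux.sub_psi_mem [DecidableEq σ] (v : σ) (f : MvPolynomial σ F) :
    f - HLaux.psi F v f ∈ Ideal.span {(MvPolynomial.X v : MvPolynomial σ F)} := by
  induction f using MvPolynomial.induction_on with
  | C a => rw [show HLaux.psi F v (MvPolynomial.C a) = MvPolynomial.C a from by
      simp [HLaux.psi, MvPolynomial.algebraMap_eq], sub_self]; exact Ideal.zero_mem _
  | add p q hp hq =>
    rw [map_add, show p + q - (HLaux.psi F v p + HLaux.psi F v q)
      = (p - HLaux.psi F v p) + (q - HLaux.psi F v q) from by ring]
    exact Ideal.add_mem _ hp hq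
  | mul_X p w hp =>
    have h1 : (MvPolynomial.X w : MvPolynomial σ F) - HLaux.psi F v (MvPolynomial.X w)
        ∈ Ideal.span {(MvPolynomial.X v : MvPolynomial σ F)} := by
      rw [show HLaux.psi F v (MvPolynomial.X w)
        = if w = v then 0 else MvPolynomial.X w from by simp [HLaux.psi]]
      split
      · next h => rw [h, sub_zero]; exact Ideal.subset_span rfl
      · rw [sub_self]; exact Ideal.zero_mem _
    rw [map_mul, show p * MvPolynomial.X w - HLaux.psi F v p * HLaux.psi F v (MvPolynomial.X w)
      = p * (MvPolynomial.X w - HLaux.psi F v (MvPolynomial.X w))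
        + HLaux.psi F v (MvPolynomial.X w) * (p - HLaux.psi F v p) from by ring]
    exact Ideal.add_mem _ (Ideal.mul_mem_left _ _ h1) (Ideal.mul_mem_left _ _ hp)

theorem HLaux.span_X_eq_ker [DecidableEq σ] (v : σ) :
    Ideal.span {(MvPolynomial.X v : MvPolynomial σ F)}
      = RingHom.ker (HLaux.psi F v).toRingHom := by
  apply le_antisymm
  · rw [Ideal.span_le, Set.singleton_subset_iff]
    show HLaux.psi F v (MvPolynomial.X v) = 0
    simp [HLaux.psi]
  · intro f hf
    have h0 : HLaux.psi F v f = 0 := hf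
    have := HLaux.sub_psi_mem v f
    rwa [h0, sub_zero] at this

theorem HLaux.span_X_isPrime [DecidableEq σ] (v : σ) :
    (Ideal.span {(MvPolynomial.X v : MvPolynomial σ F)}).IsPrime := by
  rw [HLaux.span_X_eq_ker]
  exact RingHom.ker_isPrime _

theorem HLaux.X_not_mem_span_X [DecidableEq σ] {v w : σ} (hvw : w ≠ v) :
    (MvPolynomial.X w : MvPolynomial σ F) ∉ Ideal.span {(MvPolynomial.X v : MvPolynomial σ F)} := by
  rw [HLaux.span_X_eq_ker]
  intro h
  have h0 : HLaux.psi F v (MvPolynomial.X w) = 0 := h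
  rw [show HLaux.psi F v (MvPolynomial.X w) = MvPolynomial.X w from by
    simp [HLaux.psi, hvw]] at h0
  exact MvPolynomial.X_ne_zero w h0

end SpanX

theorem HLaux.ps_lt {R : Type*} [CommRing R] {x y : PrimeSpectrum R}
    (h : x.asIdeal < y.asIdeal) : x < y :=
  lt_of_le_of_ne ((PrimeSpectrum.asIdeal_le_asIdeal x y).mp h.le)
    (fun he => h.ne (congrArg PrimeSpectrum.asIdeal he))

theorem HLaux.ps_lt' {R : Type*} [CommRing R] {x y : PrimeSpectrum R}
    (h : x < y) : x.asIdeal < y.asIdeal :=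
  lt_of_le_of_ne ((PrimeSpectrum.asIdeal_le_asIdeal x y).mpr h.le)
    (fun he => h.ne (PrimeSpectrum.ext he))

/-- If `L` is a finite lattice (with at least two elements), then `height H_L = 2`. -/
theorem stmt4 {L : Type*} [Fintype L] [Lattice L] [BoundedOrder L] [Nontrivial L]
    (F : Type*) [Field F] :
    idealHeight (Ideal.span (Set.range (fun q : L => uMon F q))) = 2 := by
  classical
  set I : Ideal (MvPolynomial ({p : L // JoinIrred p} ⊕ {p : L // JoinIrred p}) F) :=
    Ideal.span (Set.range (fun q : L => uMon F q)) with hI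
  -- ⊥ is not join-irreducible
  have hbot : ¬ JoinIrred (⊥ : L) := by
    intro h
    exact h ⟨fun q hq => absurd hq (not_lt_bot), fun c _ => bot_le⟩
  -- there is a join-irreducible element (any atom)
  obtain ⟨x, hx⟩ := exists_ne (⊥ : L)
  obtain ⟨Ba, hBa, -⟩ := (IsAtomic.eq_bot_or_exists_atom_le x).resolve_left hx
  have hBJI : JoinIrred Ba := by
    intro hlub
    exact hBa.1 (le_bot_iff.mp (hlub.2 (fun q hq => (hBa.2 q hq).le)))
  set p₀ : {p : L // JoinIrred p} := ⟨Ba, hBJI⟩ with hp₀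
  have hpbot : ∀ p : {p : L // JoinIrred p}, ¬ ((p : L) ≤ ⊥) :=
    fun p hp => hbot ((le_bot_iff.mp hp) ▸ p.2)
  have huTop : uMon F (⊤ : L) = ∏ p : {p : L // JoinIrred p}, X (Sum.inl p) := by
    unfold uMon
    exact Finset.prod_congr rfl (fun p _ => if_pos le_top)
  have huBot : uMon F (⊥ : L) = ∏ p : {p : L // JoinIrred p}, X (Sum.inr p) := by
    unfold uMon
    exact Finset.prod_congr rfl (fun p _ => if_neg (hpbot p))
  -- the evaluation killing the two variables at p₀
  set rest := {v : {p : L // JoinIrred p} ⊕ {p : L // JoinIrred p} //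
    ¬(v = Sum.inl p₀ ∨ v = Sum.inr p₀)} with hrest
  set gfun : {p : L // JoinIrred p} ⊕ {p : L // JoinIrred p} → MvPolynomial rest F :=
    fun v => if h : v = Sum.inl p₀ ∨ v = Sum.inr p₀ then 0
      else MvPolynomial.X (⟨v, h⟩ : rest) with hgfun
  set φ : MvPolynomial ({p : L // JoinIrred p} ⊕ {p : L // JoinIrred p}) F →ₐ[F]
      MvPolynomial rest F :=
    MvPolynomial.aeval gfun with hφ
  set Q : Ideal (MvPolynomial ({p : L // JoinIrred p} ⊕ {p : L // JoinIrred p}) F) :=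
    RingHom.ker φ.toRingHom with hQ
  haveI hQp : Q.IsPrime := RingHom.ker_isPrime _
  have hmemQ : ∀ z, z ∈ Q ↔ φ z = 0 := fun z => Iff.rfl
  have hIQ : I ≤ Q := by
    rw [hI, Ideal.span_le]
    rintro _ ⟨q, rfl⟩
    have hfac : φ (if (p₀ : L) ≤ q then X (Sum.inl p₀) else X (Sum.inr p₀)) = 0 := by
      split <;> simp [hφ, hgfun]
    simp only [SetLike.mem_coe]
    rw [hmemQ]
    unfold uMon
    rw [← Finset.mul_prod_erase Finset.univ _ (Finset.mem_univ p₀), map_mul, hfac, zero_mul]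
  -- the type equivalence
  set eqv : ({p : L // JoinIrred p} ⊕ {p : L // JoinIrred p}) ≃ ((Option Unit) ⊕ rest) :=
    { toFun := fun v => if h : v = Sum.inl p₀ ∨ v = Sum.inr p₀ then
        (if v = Sum.inl p₀ then Sum.inl none else Sum.inl (some ())) else Sum.inr ⟨v, h⟩
      invFun := fun w => match w with
        | Sum.inl none => Sum.inl p₀
        | Sum.inl (some _) => Sum.inr p₀
        | Sum.inr r => r.1
      left_inv := by
        intro v
        by_cases h1 : v = Sum.inl p₀
        · simp [h1]
        · by_cases h2 : v = Sum.inr p₀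
          · simp [h1, h2]
          · simp [h1, h2]
      right_inv := by
        rintro (w | r)
        · match w with
          | none => simp
          | some u => cases u; simp
        · have := r.2
          simp only [dif_neg this]; rfl
      } with heqv
  set E0 := (MvPolynomial.renameEquiv F eqv).trans
    (MvPolynomial.sumAlgEquiv F (Option Unit) rest) with hE0
  set γ : MvPolynomial (Option Unit) (MvPolynomial rest F) →ₐ[MvPolynomial rest F]
      MvPolynomial rest F :=
    MvPolynomial.aeval (fun _ : Option Unit => (0 : MvPolynomial rest F)) with hγ
  have hXval : ∀ v, γ (E0 (MvPolynomial.X v)) = φ (MvPolynomial.X v) := by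
    intro v
    have hE0X : E0 (MvPolynomial.X v)
        = (MvPolynomial.sumAlgEquiv F (Option Unit) rest) (MvPolynomial.X (eqv v)) := by
      rw [hE0, AlgEquiv.trans_apply, MvPolynomial.renameEquiv_apply, MvPolynomial.rename_X]
    by_cases h1 : v = Sum.inl p₀
    · subst h1
      have : eqv (Sum.inl p₀) = Sum.inl none := by simp [heqv]
      rw [hE0X, this, MvPolynomial.sumAlgEquiv_X_inl]
      simp [hφ, hγ, hgfun]
    · by_cases h2 : v = Sum.inr p₀
      · subst h2
        have : eqv (Sum.inr p₀) = Sum.inl (some ()) := by simp [heqv]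
        rw [hE0X, this, MvPolynomial.sumAlgEquiv_X_inl]
        simp [hφ, hγ, hgfun]
      · have hor : ¬ (v = Sum.inl p₀ ∨ v = Sum.inr p₀) := by tauto
        have : eqv v = Sum.inr ⟨v, hor⟩ := by simp [heqv, hor]
        rw [hE0X, this, MvPolynomial.sumAlgEquiv_X_inr]
        simp [hφ, hγ, hgfun, hor]
  have hcomm : ∀ z, γ (E0 z) = φ z := by
    intro z
    induction z using MvPolynomial.induction_on with
    | C a => simp [hφ, hγ, hE0, MvPolynomial.algebraMap_eq]
    | add p q hp hq => rw [map_add, map_add, map_add, hp, hq]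
    | mul_X p i hp => rw [map_mul, map_mul, map_mul, hp, hXval i]
  -- height of Q is at most 2
  have hQle2 : Order.height (⟨Q, hQp⟩ :
      PrimeSpectrum (MvPolynomial ({p : L // JoinIrred p} ⊕ {p : L // JoinIrred p}) F)) ≤ 2 := by
    apply Order.height_le
    intro pser hlast
    by_contra hlen
    push_neg at hlen
    have h3 : 3 ≤ pser.length := by
      have : (2:ℕ∞) < (pser.length : ℕ∞) := hlen
      norm_cast at this
    set n := pser.length with hn
    let i0 : Fin (n+1) := ⟨n-3, by omega⟩
    let i1 : Fin (n+1) := ⟨n-2, by omega⟩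
    let i2 : Fin (n+1) := ⟨n-1, by omega⟩
    let i3 : Fin (n+1) := ⟨n, by omega⟩
    have e01 : pser i0 < pser i1 := pser.strictMono (by rw [Fin.mk_lt_mk]; omega)
    have e12 : pser i1 < pser i2 := pser.strictMono (by rw [Fin.mk_lt_mk]; omega)
    have e23 : pser i2 < pser i3 := pser.strictMono (by rw [Fin.mk_lt_mk]; omega)
    have hlastidx : i3 = Fin.last n := Fin.ext rfl
    have elast : pser i3 = ⟨Q, hQp⟩ := by
      rw [hlastidx]
      exact hlast
    have hker : Ideal.comap E0.symm.toRingEquiv Q ≤ RingHom.ker (γ.toRingHom) := by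
      intro z hz
      have hz' : E0.symm z ∈ Q := hz
      rw [hmemQ] at hz'
      have : γ (E0 (E0.symm z)) = 0 := by rw [hcomm, hz']
      rwa [AlgEquiv.apply_symm_apply] at this
    have hbot3 := HLaux.L3 (Ideal.comap E0.symm.toRingEquiv (pser i1).asIdeal)
      (Ideal.comap E0.symm.toRingEquiv (pser i2).asIdeal)
      (Ideal.comap E0.symm.toRingEquiv (pser i3).asIdeal)
      (Ideal.comap_isPrime _ _) (Ideal.comap_isPrime _ _) (Ideal.comap_isPrime _ _)
      (HLaux.comap_equiv_lt _ (HLaux.ps_lt' e12))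
      (HLaux.comap_equiv_lt _ (HLaux.ps_lt' e23))
      (by rw [elast]; exact hker)
    have := HLaux.comap_equiv_lt E0.symm.toRingEquiv (HLaux.ps_lt' e01)
    rw [hbot3] at this
    exact not_lt_bot this
  -- every minimal prime has height at least 2
  have hlow : ∀ Ps : {P : PrimeSpectrum
      (MvPolynomial ({p : L // JoinIrred p} ⊕ {p : L // JoinIrred p}) F) //
      P.asIdeal ∈ I.minimalPrimes}, 2 ≤ Order.height Ps.1 := by
    rintro ⟨⟨P, hPp⟩, hPmin⟩
    haveI := hPp
    have hIP : I ≤ P := hPmin.1.2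
    have htopmem : uMon F (⊤:L) ∈ P := hIP (Ideal.subset_span ⟨⊤, rfl⟩)
    have hbotmem : uMon F (⊥:L) ∈ P := hIP (Ideal.subset_span ⟨⊥, rfl⟩)
    rw [huTop] at htopmem
    rw [huBot] at hbotmem
    obtain ⟨p1, -, hp1⟩ := (Ideal.IsPrime.prod_mem_iff).mp htopmem
    obtain ⟨p2, -, hp2⟩ := (Ideal.IsPrime.prod_mem_iff).mp hbotmem
    have hs1 : (⊥ : Ideal (MvPolynomial ({p : L // JoinIrred p} ⊕ {p : L // JoinIrred p}) F))
        < Ideal.span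
        {(X (Sum.inl p1) : MvPolynomial ({p : L // JoinIrred p} ⊕ {p : L // JoinIrred p}) F)} := by
      rw [bot_lt_iff_ne_bot, Ne, Ideal.span_singleton_eq_bot]
      exact MvPolynomial.X_ne_zero _
    have hs2 : Ideal.span
        {(X (Sum.inl p1) : MvPolynomial ({p : L // JoinIrred p} ⊕ {p : L // JoinIrred p}) F)}
        < P := by
      refine lt_of_le_of_ne ((Ideal.span_singleton_le_iff_mem _).mpr hp1) ?_
      intro he
      exact HLaux.X_not_mem_span_X (v := Sum.inl p1) (w := Sum.inr p2)
        (by simp) (he ▸ hp2)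
    set c : LTSeries (PrimeSpectrum
        (MvPolynomial ({p : L // JoinIrred p} ⊕ {p : L // JoinIrred p}) F)) :=
      { length := 2
        toFun := ![⟨⊥, Ideal.bot_prime⟩,
          ⟨Ideal.span {X (Sum.inl p1)}, HLaux.span_X_isPrime _⟩, ⟨P, hPp⟩]
        step := by
          intro i
          fin_cases i
          · exact HLaux.ps_lt hs1
          · exact HLaux.ps_lt hs2 } with hc
    have hlen := Order.length_le_height_last (p := c)
    have hlast : c.last = ⟨P, hPp⟩ := rfl
    rw [hlast] at hlen
    exact_mod_cast hlen
  -- conclude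
  apply le_antisymm
  · obtain ⟨P, hPmin, hPQ⟩ := Ideal.exists_minimalPrimes_le hIQ
    haveI hPp : P.IsPrime := hPmin.1.1
    have h1 : idealHeight I ≤ Order.height (⟨P, hPp⟩ : PrimeSpectrum _) :=
      iInf_le _ (⟨⟨P, hPp⟩, hPmin⟩ : {P' : PrimeSpectrum _ // P'.asIdeal ∈ I.minimalPrimes})
    refine h1.trans ((Order.height_mono ?_).trans hQle2)
    exact (PrimeSpectrum.asIdeal_le_asIdeal _ _).mp hPQ
  · exact le_iInf hlow
end

section
/- Let L be a finite lattice and P its poset of join-irreducible elements. A prime ideal of S is a minimal prime ideal of H_L of height 2 if and only if it is of the form (x_p, y_q) with p, q ∈ P and p ≤ q. -/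
open MvPolynomial

section SpanVars

variable (F : Type*) [Field F] {σ : Type*}

open Classical in
/-- The evaluation killing the variables in `s`. -/
noncomputable def killHom (s : Set σ) :
    MvPolynomial σ F →ₐ[F] MvPolynomial {k : σ // k ∉ s} F :=
  aeval (fun k => if h : k ∈ s then 0 else X ⟨k, h⟩)

lemma killHom_X_mem {s : Set σ} {k : σ} (h : k ∈ s) : killHom F s (X k) = 0 := by
  classical simp [killHom, h]

lemma killHom_X_not_mem {s : Set σ} {k : σ} (h : k ∉ s) :
    killHom F s (X k) = X ⟨k, h⟩ := by
  classical simp [killHom, h]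

lemma span_image_X_eq_ker (s : Set σ) :
    Ideal.span (X '' s : Set (MvPolynomial σ F)) = RingHom.ker (killHom F s).toRingHom := by
  apply le_antisymm
  · rw [Ideal.span_le]
    rintro _ ⟨k, hk, rfl⟩
    simp [RingHom.mem_ker, killHom_X_mem F hk]
  · intro f hf
    rw [RingHom.mem_ker] at hf
    have key : ∀ g : MvPolynomial σ F,
        g - rename (Subtype.val) (killHom F s g) ∈ Ideal.span (X '' s : Set (MvPolynomial σ F)) := by
      intro g
      induction g using MvPolynomial.induction_on with
      | C a => simp [killHom]
      | add p q hp hq =>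
          have := Ideal.add_mem _ hp hq
          simpa [add_sub_add_comm, map_add] using this
      | mul_X p k hp =>
          rw [map_mul]
          by_cases hk : k ∈ s
          · rw [killHom_X_mem F hk]
            simp only [map_mul, mul_zero, map_zero, sub_zero]
            exact Ideal.mul_mem_left _ p (Ideal.subset_span ⟨k, hk, rfl⟩)
          · rw [killHom_X_not_mem F hk]
            have : p * X k - rename (Subtype.val) (killHom F s p) * rename Subtype.val (X (⟨k, hk⟩ : {k : σ // k ∉ s}))
                = (p - rename Subtype.val (killHom F s p)) * X k := by
              rw [rename_X]; ring
            rw [map_mul, this]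
            exact Ideal.mul_mem_right _ _ hp
    have := key f
    rw [show (killHom F s) f = 0 from hf, map_zero, sub_zero] at this
    exact this

lemma spanX_isPrime (s : Set σ) :
    (Ideal.span (X '' s : Set (MvPolynomial σ F))).IsPrime := by
  rw [span_image_X_eq_ker]
  exact RingHom.ker_isPrime _

lemma X_mem_spanX {s : Set σ} {k : σ} :
    X k ∈ Ideal.span (X '' s : Set (MvPolynomial σ F)) ↔ k ∈ s := by
  constructor
  · intro h
    by_contra hk
    rw [span_image_X_eq_ker, RingHom.mem_ker] at h
    rw [AlgHom.toRingHom_eq_coe, RingHom.coe_coe, killHom_X_not_mem F hk] at h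
    exact MvPolynomial.X_ne_zero _ h
  · intro h; exact Ideal.subset_span ⟨k, h, rfl⟩

lemma prodX_not_mem {s : Set σ} {ι : Type*} (u : Finset ι) (f : ι → σ)
    (h : ∀ t ∈ u, f t ∉ s) :
    (∏ t ∈ u, X (f t) : MvPolynomial σ F) ∉ Ideal.span (X '' s : Set (MvPolynomial σ F)) := by
  rw [span_image_X_eq_ker, RingHom.mem_ker]
  intro hmem
  rw [AlgHom.toRingHom_eq_coe, RingHom.coe_coe, map_prod] at hmem
  have : ∀ t ∈ u, killHom F s (X (f t)) ≠ 0 := by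
    intro t ht
    rw [killHom_X_not_mem F (h t ht)]
    exact MvPolynomial.X_ne_zero _
  exact (Finset.prod_ne_zero_iff.mpr this) hmem

end SpanVars

section Transfer

variable {A B : Type*} [CommRing A] [CommRing B] (e : A ≃+* B)

lemma comapEquiv_mem {I : Ideal A} {x : A} :
    e x ∈ I.comap (e.symm : B →+* A) ↔ x ∈ I := by
  simp [Ideal.mem_comap]

lemma comapEquiv_strictMono {I J : Ideal A} (h : I < J) :
    I.comap (e.symm : B →+* A) < J.comap (e.symm : B →+* A) := by
  rw [lt_iff_le_and_ne] at h ⊢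
  refine ⟨Ideal.comap_mono h.1, ?_⟩
  intro heq
  apply h.2
  have : ∀ K : Ideal A, (K.comap (e.symm : B →+* A)).comap (e : A →+* B) = K := by
    intro K
    ext x
    simp [Ideal.mem_comap]
  rw [← this I, ← this J, heq]

lemma comapEquiv_ne_bot {I : Ideal A} (h : I ≠ ⊥) :
    I.comap (e.symm : B →+* A) ≠ ⊥ := by
  intro hbot
  apply h
  rw [eq_bot_iff]
  intro x hx
  have : e x ∈ I.comap (e.symm : B →+* A) := (comapEquiv_mem e).mpr hx
  rw [hbot, Ideal.mem_bot] at this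
  simp only [Ideal.mem_bot]
  simpa using this

lemma comapEquiv_isPrime {I : Ideal A} (h : I.IsPrime) :
    (I.comap (e.symm : B →+* A)).IsPrime :=
  Ideal.IsPrime.comap _ (hK := h)

end Transfer

section OneVar

open MvPolynomial

attribute [local instance] MvPolynomial.algebraMvPolynomial

/-- In `B[X₀]` (one variable over a domain `B`), there is no pair of primes `P < Q`
with `P ≠ ⊥` and `Q` disjoint from the nonzero constants. -/
lemma oneVarMv {B : Type*} [CommRing B] [IsDomain B] {P Q : Ideal (MvPolynomial (Fin 1) B)}
    (hP : P.IsPrime) (hQ : Q.IsPrime) (hPQ : P < Q) (hPbot : P ≠ ⊥)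
    (hdisj : Disjoint (((nonZeroDivisors B).map (C : B →+* MvPolynomial (Fin 1) B) : Submonoid (MvPolynomial (Fin 1) B)) : Set (MvPolynomial (Fin 1) B)) (Q : Set (MvPolynomial (Fin 1) B))) :
    False := by
  classical
  set K := FractionRing B
  set M : Submonoid (MvPolynomial (Fin 1) B) :=
    (nonZeroDivisors B).map (C : B →+* MvPolynomial (Fin 1) B) with hM
  have hMle : M ≤ nonZeroDivisors (MvPolynomial (Fin 1) B) := by
    rintro _ ⟨b, hb, rfl⟩
    exact mem_nonZeroDivisors_of_ne_zero (by
      simpa using nonZeroDivisors.ne_zero hb)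
  have hPdisj : Disjoint (M : Set (MvPolynomial (Fin 1) B)) (P : Set (MvPolynomial (Fin 1) B)) :=
    hdisj.mono_right (by exact_mod_cast le_of_lt hPQ)
  let ORD := IsLocalization.orderIsoOfPrime M (MvPolynomial (Fin 1) K)
  let P' := ORD.symm ⟨P, hP, hPdisj⟩
  let Q' := ORD.symm ⟨Q, hQ, hdisj⟩
  have hlt' : P' < Q' := by
    apply ORD.symm.lt_iff_lt.mpr
    exact Subtype.mk_lt_mk.mpr hPQ
  have hcomapP : Ideal.comap (algebraMap (MvPolynomial (Fin 1) B) (MvPolynomial (Fin 1) K)) P'.1 = P := by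
    have := ORD.apply_symm_apply ⟨P, hP, hPdisj⟩
    exact congrArg Subtype.val this
  have hP'bot : P'.1 ≠ ⊥ := by
    intro h
    apply hPbot
    rw [← hcomapP, h]
    rw [eq_bot_iff]
    intro x hx
    rw [Ideal.mem_comap, Ideal.mem_bot] at hx
    rw [Ideal.mem_bot]
    exact IsLocalization.injective (MvPolynomial (Fin 1) K) hMle (by simpa using hx)
  -- transfer to Polynomial K
  let ρ : MvPolynomial (Fin 1) K ≃+* Polynomial K :=
    (MvPolynomial.finSuccEquiv K 0).toRingEquiv.trans
      (Polynomial.mapAlgEquiv (MvPolynomial.isEmptyAlgEquiv K (Fin 0))).toRingEquiv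
  let P'' := P'.1.comap (ρ.symm : Polynomial K →+* MvPolynomial (Fin 1) K)
  let Q'' := Q'.1.comap (ρ.symm : Polynomial K →+* MvPolynomial (Fin 1) K)
  have hP''p : P''.IsPrime := comapEquiv_isPrime ρ P'.2
  have hQ''p : Q''.IsPrime := comapEquiv_isPrime ρ Q'.2
  have hP''bot : P'' ≠ ⊥ := comapEquiv_ne_bot ρ hP'bot
  have hlt'' : P'' < Q'' := comapEquiv_strictMono ρ (by exact_mod_cast hlt')
  have hmax : P''.IsMaximal := @IsPrime.to_maximal_ideal _ _ _ _ _ hP''p hP''bot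
  exact hQ''p.ne_top (hmax.1.2 Q'' hlt'')

end OneVar

section TwoVar

open MvPolynomial

variable {K : Type*} [Field K]

lemma exists_univar_aux (Ψ : MvPolynomial (Fin 2) K ≃ₐ[K] MvPolynomial (Fin 1) (Polynomial K))
    {v : Fin 2} (hΨ : Ψ (X v) = C Polynomial.X)
    {P1 P2 : Ideal (MvPolynomial (Fin 2) K)} (h1 : P1.IsPrime) (h2 : P2.IsPrime)
    (hlt : P1 < P2) (hbot : P1 ≠ ⊥) :
    ∃ b : Polynomial K, b ≠ 0 ∧ Polynomial.aeval (X v : MvPolynomial (Fin 2) K) b ∈ P2 := by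
  classical
  have key : ∀ b : Polynomial K, Ψ (Polynomial.aeval (X v : MvPolynomial (Fin 2) K) b) = C b := by
    have hext : (Ψ.toRingEquiv : MvPolynomial (Fin 2) K →+* MvPolynomial (Fin 1) (Polynomial K)).comp
        (Polynomial.aeval (X v : MvPolynomial (Fin 2) K) : Polynomial K →ₐ[K] MvPolynomial (Fin 2) K).toRingHom
        = (C : Polynomial K →+* MvPolynomial (Fin 1) (Polynomial K)) := by
      apply Polynomial.ringHom_ext
      · intro a
        simp only [RingHom.comp_apply, AlgHom.toRingHom_eq_coe, RingHom.coe_coe,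
          Polynomial.aeval_C]
        show Ψ ((algebraMap K (MvPolynomial (Fin 2) K)) a) = C (Polynomial.C a)
        rw [AlgEquiv.commutes,
          IsScalarTower.algebraMap_apply K (Polynomial K) (MvPolynomial (Fin 1) (Polynomial K)),
          MvPolynomial.algebraMap_eq, Polynomial.algebraMap_eq]
      · simp only [RingHom.comp_apply, AlgHom.toRingHom_eq_coe, RingHom.coe_coe,
          Polynomial.aeval_X]
        exact hΨ
    intro b
    exact RingHom.congr_fun hext b
  by_contra hno
  push_neg at hno
  -- transfer the chain through Ψ
  let e := Ψ.toRingEquiv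
  let Q1 := P1.comap (e.symm : MvPolynomial (Fin 1) (Polynomial K) →+* MvPolynomial (Fin 2) K)
  let Q2 := P2.comap (e.symm : MvPolynomial (Fin 1) (Polynomial K) →+* MvPolynomial (Fin 2) K)
  have hQ1 : Q1.IsPrime := comapEquiv_isPrime e h1
  have hQ2 : Q2.IsPrime := comapEquiv_isPrime e h2
  have hQlt : Q1 < Q2 := comapEquiv_strictMono e hlt
  have hQbot : Q1 ≠ ⊥ := comapEquiv_ne_bot e hbot
  have hdisj : Disjoint
      (((nonZeroDivisors (Polynomial K)).map (C : Polynomial K →+* MvPolynomial (Fin 1) (Polynomial K)) : Submonoid (MvPolynomial (Fin 1) (Polynomial K))) : Set (MvPolynomial (Fin 1) (Polynomial K)))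
      (Q2 : Set (MvPolynomial (Fin 1) (Polynomial K))) := by
    rw [Set.disjoint_left]
    rintro _ ⟨b, hb, rfl⟩ hmem
    have hb0 : b ≠ 0 := nonZeroDivisors.ne_zero hb
    have : e.symm (C b) ∈ P2 := hmem
    have heq : e.symm (C b) = Polynomial.aeval (X v : MvPolynomial (Fin 2) K) b := by
      have := key b
      have : e.symm (C b) = e.symm (e (Polynomial.aeval (X v : MvPolynomial (Fin 2) K) b)) := by
        rw [show e (Polynomial.aeval (X v : MvPolynomial (Fin 2) K) b) = Ψ _ from rfl, this]
      simpa using this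
    rw [heq] at this
    exact hno b hb0 this
  exact oneVarMv hQ1 hQ2 hQlt hQbot hdisj

/-- The base isomorphism `MvPolynomial (Fin 1) K ≃ₐ[K] Polynomial K`. -/
noncomputable def oneVarEquiv : MvPolynomial (Fin 1) K ≃ₐ[K] Polynomial K :=
  (MvPolynomial.finSuccEquiv K 0).trans (Polynomial.mapAlgEquiv (MvPolynomial.isEmptyAlgEquiv K (Fin 0)))

lemma oneVarEquiv_X : (oneVarEquiv (K := K)) (X 0) = Polynomial.X := by
  simp [oneVarEquiv, MvPolynomial.finSuccEquiv_X_zero]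

/-- `Fin 2 ≃ Fin 1 ⊕ Fin 1` sending `0` to `inl 0` and `1` to `inr 0`. -/
def finTwoSum : Fin 2 ≃ (Fin 1 ⊕ Fin 1) :=
  ⟨![Sum.inl 0, Sum.inr 0], Sum.elim (fun _ => 0) (fun _ => 1), by decide, by decide⟩

/-- The isomorphism `MvPolynomial (Fin 2) K ≃ₐ[K] MvPolynomial (Fin 1) (Polynomial K)`
sending `X 1` to `C Polynomial.X` and `X 0` to `X 0`. -/
noncomputable def twoVarEquiv : MvPolynomial (Fin 2) K ≃ₐ[K] MvPolynomial (Fin 1) (Polynomial K) :=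
  ((renameEquiv K finTwoSum).trans (sumAlgEquiv K (Fin 1) (Fin 1))).trans
    (mapAlgEquiv (Fin 1) oneVarEquiv)

lemma twoVarEquiv_X1 : (twoVarEquiv (K := K)) (X 1) = C Polynomial.X := by
  simp only [twoVarEquiv, AlgEquiv.trans_apply, renameEquiv_apply, rename_X]
  rw [show finTwoSum (1 : Fin 2) = Sum.inr 0 from rfl]
  rw [show (sumAlgEquiv K (Fin 1) (Fin 1)) (X (Sum.inr 0)) = C (X 0) by
    simp [sumAlgEquiv_X_inr, sumToIter_Xr]]
  rw [mapAlgEquiv_apply, map_C]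
  congr 1
  exact oneVarEquiv_X

lemma exists_univar (v : Fin 2) {P1 P2 : Ideal (MvPolynomial (Fin 2) K)}
    (h1 : P1.IsPrime) (h2 : P2.IsPrime) (hlt : P1 < P2) (hbot : P1 ≠ ⊥) :
    ∃ b : Polynomial K, b ≠ 0 ∧ Polynomial.aeval (X v : MvPolynomial (Fin 2) K) b ∈ P2 := by
  have h01 : v = 0 ∨ v = 1 := by omega
  rcases h01 with rfl | rfl
  · refine exists_univar_aux ((renameEquiv K (Equiv.swap 0 1)).trans twoVarEquiv) ?_ h1 h2 hlt hbot
    rw [AlgEquiv.trans_apply, renameEquiv_apply, rename_X]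
    rw [show (Equiv.swap (0 : Fin 2) 1) 0 = 1 by decide]
    exact twoVarEquiv_X1
  · exact exists_univar_aux twoVarEquiv twoVarEquiv_X1 h1 h2 hlt hbot

end TwoVar

section Dim2

open MvPolynomial

variable {K : Type*} [Field K]

/-- `K[x,y]` has Krull dimension at most 2: there is no chain `⊥ ≠ P1 < P2 < P3` of primes. -/
lemma no_three_chain {P1 P2 P3 : Ideal (MvPolynomial (Fin 2) K)}
    (h1 : P1.IsPrime) (h2 : P2.IsPrime) (h3 : P3.IsPrime)
    (h12 : P1 < P2) (h23 : P2 < P3) (hbot : P1 ≠ ⊥) : False := by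
  classical
  -- P2 contains a nonzero univariate polynomial in each variable
  have hint : ∀ v : Fin 2, IsIntegral K (Ideal.Quotient.mk P2 (X v)) := by
    intro v
    obtain ⟨b, hb0, hbmem⟩ := exists_univar v h1 h2 h12 hbot
    refine ⟨b * Polynomial.C (b.leadingCoeff)⁻¹, Polynomial.monic_mul_leadingCoeff_inv hb0, ?_⟩
    rw [← Polynomial.aeval_def]
    have : (Polynomial.aeval (Ideal.Quotient.mk P2 (X v)))
        (b * Polynomial.C (b.leadingCoeff)⁻¹)
        = Ideal.Quotient.mk P2 ((Polynomial.aeval (X v : MvPolynomial (Fin 2) K))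
            (b * Polynomial.C (b.leadingCoeff)⁻¹)) := by
      rw [show (Ideal.Quotient.mk P2) (X v) = (Ideal.Quotient.mkₐ K P2) (X v) from rfl,
        Polynomial.aeval_algHom_apply]
      rfl
    rw [this, Ideal.Quotient.eq_zero_iff_mem, map_mul]
    exact Ideal.mul_mem_right _ _ hbmem
  haveI : Algebra.IsIntegral K (MvPolynomial (Fin 2) K ⧸ P2) := by
    constructor
    intro x
    obtain ⟨f, rfl⟩ := Ideal.Quotient.mk_surjective x
    induction f using MvPolynomial.induction_on with
    | C a =>
        rw [show (Ideal.Quotient.mk P2) (MvPolynomial.C a)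
          = algebraMap K (MvPolynomial (Fin 2) K ⧸ P2) a from rfl]
        exact isIntegral_algebraMap
    | add p q hp hq =>
        rw [RingHom.map_add]; exact hp.add hq
    | mul_X p v hp =>
        rw [RingHom.map_mul]; exact hp.mul (hint v)
  haveI : Nontrivial (MvPolynomial (Fin 2) K ⧸ P2) :=
    Ideal.Quotient.nontrivial_iff.mpr h2.ne_top
  have hfield : IsField (MvPolynomial (Fin 2) K ⧸ P2) :=
    (Algebra.IsIntegral.isField_iff_isField
      (RingHom.injective (algebraMap K (MvPolynomial (Fin 2) K ⧸ P2)))).mp (Field.toIsField K)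
  have hmax : P2.IsMaximal := Ideal.Quotient.maximal_of_isField _ hfield
  exact h3.ne_top (hmax.1.2 P3 h23)

end Dim2

section Reduction

open MvPolynomial

attribute [local instance] MvPolynomial.algebraMvPolynomial

variable {F : Type*} [Field F] {σ : Type*}

/-- There is no chain of four primes below `(X i, X j)` in a polynomial ring. -/
lemma no_four_chain_under_span {i j : σ} (hij : i ≠ j)
    {q0 q1 q2 q3 : Ideal (MvPolynomial σ F)}
    (h0 : q0.IsPrime) (h1 : q1.IsPrime) (h2 : q2.IsPrime) (h3 : q3.IsPrime)
    (h01 : q0 < q1) (h12 : q1 < q2) (h23 : q2 < q3)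
    (hq3 : q3 = Ideal.span {(X i : MvPolynomial σ F), X j}) : False := by
  classical
  let τ := {k : σ // k ≠ i ∧ k ≠ j}
  let A := MvPolynomial τ F
  -- the equivalence σ ≃ Fin 2 ⊕ τ
  let ε : σ ≃ (Fin 2 ⊕ τ) :=
    { toFun := fun k => if h : k = i then Sum.inl 0 else if h' : k = j then Sum.inl 1
        else Sum.inr ⟨k, h, h'⟩
      invFun := Sum.elim ![i, j] Subtype.val
      left_inv := by
        intro k
        by_cases h : k = i
        · simp [h]
        · by_cases h' : k = j <;> simp [h, h', hij.symm]
      right_inv := by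
        rintro (w | t)
        · fin_cases w
          · simp
          · simp [hij.symm, hij]
        · have h1 := t.2.1
          have h2 := t.2.2
          simp [h1, h2] }
  have hεi : ε i = Sum.inl 0 := by simp [ε]
  have hεj : ε j = Sum.inl 1 := by simp [ε, hij.symm, hij]
  let Θ : MvPolynomial σ F ≃+* MvPolynomial (Fin 2) A :=
    ((renameEquiv F ε).trans (sumAlgEquiv F (Fin 2) τ)).toRingEquiv
  have hΘi : Θ (X i) = X 0 := by
    simp only [Θ, AlgEquiv.toRingEquiv_eq_coe, AlgEquiv.coe_ringEquiv, AlgEquiv.trans_apply,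
      renameEquiv_apply, rename_X, hεi]
    simp [sumAlgEquiv_X_inl, sumToIter_Xl]
  have hΘj : Θ (X j) = X 1 := by
    simp only [Θ, AlgEquiv.toRingEquiv_eq_coe, AlgEquiv.coe_ringEquiv, AlgEquiv.trans_apply,
      renameEquiv_apply, rename_X, hεj]
    simp [sumAlgEquiv_X_inl, sumToIter_Xl]
  -- transfer the chain
  let Qm : Fin 4 → Ideal (MvPolynomial (Fin 2) A) :=
    ![q0.comap (Θ.symm : MvPolynomial (Fin 2) A →+* MvPolynomial σ F),
      q1.comap (Θ.symm : MvPolynomial (Fin 2) A →+* MvPolynomial σ F),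
      q2.comap (Θ.symm : MvPolynomial (Fin 2) A →+* MvPolynomial σ F),
      q3.comap (Θ.symm : MvPolynomial (Fin 2) A →+* MvPolynomial σ F)]
  have hsymm_i : Θ.symm (X 0) = X i := by rw [← hΘi]; exact Θ.symm_apply_apply _
  have hsymm_j : Θ.symm (X 1) = X j := by rw [← hΘj]; exact Θ.symm_apply_apply _
  have hQ3 : Qm 3 = Ideal.span {(X 0 : MvPolynomial (Fin 2) A), X 1} := by
    show q3.comap (Θ.symm : MvPolynomial (Fin 2) A →+* MvPolynomial σ F) = _
    apply le_antisymm
    · intro f hf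
      rw [Ideal.mem_comap, hq3, Ideal.mem_span_pair] at hf
      obtain ⟨a, b, hab⟩ := hf
      have hf' : f = Θ (a * X i + b * X j) := by
        rw [hab]
        exact (Θ.apply_symm_apply f).symm
      rw [hf', map_add, map_mul, map_mul, hΘi, hΘj]
      rw [Ideal.mem_span_pair]
      exact ⟨Θ a, Θ b, rfl⟩
    · rw [Ideal.span_le]
      rintro x hx
      rcases hx with rfl | rfl
      · show Θ.symm (X 0) ∈ q3
        rw [hsymm_i, hq3]
        exact Ideal.subset_span (by simp)
      · show Θ.symm (X 1) ∈ q3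
        rw [hsymm_j, hq3]
        exact Ideal.subset_span (by simp)
  -- disjointness from the nonzero "constants"
  have hdisjQ : ∀ (Q : Ideal (MvPolynomial (Fin 2) A)),
      Q ≤ Qm 3 →
      Disjoint (((nonZeroDivisors A).map (C : A →+* MvPolynomial (Fin 2) A) : Submonoid (MvPolynomial (Fin 2) A)) : Set (MvPolynomial (Fin 2) A)) (Q : Set (MvPolynomial (Fin 2) A)) := by
    intro Q hQle
    rw [Set.disjoint_left]
    rintro _ ⟨a, ha, rfl⟩ hmem
    have ha0 : a ≠ 0 := nonZeroDivisors.ne_zero ha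
    have hmem3 : (C a : MvPolynomial (Fin 2) A) ∈ Qm 3 := hQle hmem
    rw [hQ3] at hmem3
    -- kill both variables
    let κ : MvPolynomial (Fin 2) A →+* A := (aeval (fun _ : Fin 2 => (0 : A))).toRingHom
    have hker : Ideal.span {(X 0 : MvPolynomial (Fin 2) A), X 1} ≤ RingHom.ker κ := by
      rw [Ideal.span_le]
      rintro x hx
      rcases hx with rfl | rfl <;> simp [κ, RingHom.mem_ker]
    have := hker hmem3
    rw [RingHom.mem_ker] at this
    simp [κ] at this
    exact ha0 this
  have hprime : ∀ m : Fin 4, (Qm m).IsPrime := by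
    intro m
    fin_cases m
    · exact comapEquiv_isPrime Θ h0
    · exact comapEquiv_isPrime Θ h1
    · exact comapEquiv_isPrime Θ h2
    · exact comapEquiv_isPrime Θ h3
  have hQ01 : Qm 0 < Qm 1 := comapEquiv_strictMono Θ h01
  have hQ12 : Qm 1 < Qm 2 := comapEquiv_strictMono Θ h12
  have hQ23 : Qm 2 < Qm 3 := comapEquiv_strictMono Θ h23
  -- localize at the nonzero constants
  let K := FractionRing A
  let M : Submonoid (MvPolynomial (Fin 2) A) :=
    (nonZeroDivisors A).map (C : A →+* MvPolynomial (Fin 2) A)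
  let ORD := IsLocalization.orderIsoOfPrime M (MvPolynomial (Fin 2) K)
  have hd0 := hdisjQ (Qm 0) (le_of_lt (lt_trans hQ01 (lt_trans hQ12 hQ23)))
  have hd1 := hdisjQ (Qm 1) (le_of_lt (lt_trans hQ12 hQ23))
  have hd2 := hdisjQ (Qm 2) (le_of_lt hQ23)
  have hd3 := hdisjQ (Qm 3) le_rfl
  let P0 := ORD.symm ⟨Qm 0, hprime 0, hd0⟩
  let P1 := ORD.symm ⟨Qm 1, hprime 1, hd1⟩
  let P2 := ORD.symm ⟨Qm 2, hprime 2, hd2⟩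
  let P3 := ORD.symm ⟨Qm 3, hprime 3, hd3⟩
  have hP01 : P0 < P1 := ORD.symm.lt_iff_lt.mpr (Subtype.mk_lt_mk.mpr hQ01)
  have hP12 : P1 < P2 := ORD.symm.lt_iff_lt.mpr (Subtype.mk_lt_mk.mpr hQ12)
  have hP23 : P2 < P3 := ORD.symm.lt_iff_lt.mpr (Subtype.mk_lt_mk.mpr hQ23)
  have hP1bot : P1.1 ≠ ⊥ := by
    intro h
    have : P0.1 < P1.1 := hP01
    rw [h] at this
    exact not_lt_bot this
  exact no_three_chain P1.2 P2.2 P3.2 hP12 hP23 hP1bot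

end Reduction

section Height

open MvPolynomial

variable (F : Type*) [Field F] {σ : Type*}

lemma spanPair_isPrime {i j : σ} :
    (Ideal.span {(X i : MvPolynomial σ F), X j}).IsPrime := by
  have : ({(X i : MvPolynomial σ F), X j} : Set (MvPolynomial σ F)) = X '' {i, j} := by
    rw [Set.image_pair]
  rw [this]
  exact spanX_isPrime F _

lemma spanSingle_isPrime (i : σ) :
    (Ideal.span {(X i : MvPolynomial σ F)}).IsPrime := by
  have : ({(X i : MvPolynomial σ F)} : Set (MvPolynomial σ F)) = X '' {i} := by
    rw [Set.image_singleton]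
  rw [this]
  exact spanX_isPrime F _

lemma height_spanPair {i j : σ} (hij : i ≠ j) :
    Order.height (⟨Ideal.span {(X i : MvPolynomial σ F), X j}, spanPair_isPrime F⟩ :
      PrimeSpectrum (MvPolynomial σ F)) = 2 := by
  classical
  apply le_antisymm
  · -- upper bound: no chain of length 3
    apply Order.height_le
    intro p hplast
    by_contra hlen
    push_neg at hlen
    have h3 : 3 ≤ p.length := by exact_mod_cast hlen
    -- four consecutive indices
    let a0 : Fin (p.length + 1) := ⟨p.length - 3, by omega⟩
    let a1 : Fin (p.length + 1) := ⟨p.length - 2, by omega⟩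
    let a2 : Fin (p.length + 1) := ⟨p.length - 1, by omega⟩
    let a3 : Fin (p.length + 1) := ⟨p.length, by omega⟩
    have h01 : p a0 < p a1 := p.strictMono (by simp only [a0, a1, Fin.mk_lt_mk]; omega)
    have h12 : p a1 < p a2 := p.strictMono (by simp only [a1, a2, Fin.mk_lt_mk]; omega)
    have h23 : p a2 < p a3 := p.strictMono (by simp only [a2, a3, Fin.mk_lt_mk]; omega)
    have hlast : p a3 = ⟨Ideal.span {(X i : MvPolynomial σ F), X j}, spanPair_isPrime F⟩ := by
      rw [← hplast]
      rfl
    refine no_four_chain_under_span hij (p a0).2 (p a1).2 (p a2).2 (p a3).2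
      ?_ ?_ ?_ ?_
    · exact (PrimeSpectrum.asIdeal_lt_asIdeal _ _).mpr h01
    · exact (PrimeSpectrum.asIdeal_lt_asIdeal _ _).mpr h12
    · exact (PrimeSpectrum.asIdeal_lt_asIdeal _ _).mpr h23
    · rw [hlast]
  · -- lower bound: the chain ⊥ < (X i) < (X i, X j)
    have hbot_lt : (⟨⊥, Ideal.bot_prime⟩ : PrimeSpectrum (MvPolynomial σ F)) <
        ⟨Ideal.span {(X i : MvPolynomial σ F)}, spanSingle_isPrime F i⟩ := by
      rw [← PrimeSpectrum.asIdeal_lt_asIdeal]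
      refine lt_of_le_of_ne bot_le ?_
      intro h
      have h' : (⊥ : Ideal (MvPolynomial σ F)) = Ideal.span {(X i : MvPolynomial σ F)} := h
      have : (X i : MvPolynomial σ F) ∈ (⊥ : Ideal (MvPolynomial σ F)) := by
        rw [h']
        exact Ideal.subset_span rfl
      rw [Ideal.mem_bot] at this
      exact MvPolynomial.X_ne_zero i this
    have hmid_lt : (⟨Ideal.span {(X i : MvPolynomial σ F)}, spanSingle_isPrime F i⟩ :
        PrimeSpectrum (MvPolynomial σ F)) <
        ⟨Ideal.span {(X i : MvPolynomial σ F), X j}, spanPair_isPrime F⟩ := by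
      rw [← PrimeSpectrum.asIdeal_lt_asIdeal]
      refine lt_of_le_of_ne (Ideal.span_mono (by simp)) ?_
      intro h
      have h' : Ideal.span {(X i : MvPolynomial σ F)}
          = Ideal.span {(X i : MvPolynomial σ F), X j} := h
      have hXj : (X j : MvPolynomial σ F) ∈ Ideal.span {(X i : MvPolynomial σ F)} := by
        rw [h']
        exact Ideal.subset_span (by simp)
      rw [show ({(X i : MvPolynomial σ F)} : Set (MvPolynomial σ F)) = X '' {i} by
        rw [Set.image_singleton]] at hXj
      rw [X_mem_spanX] at hXj
      exact hij (hXj.symm)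
    let c : LTSeries (PrimeSpectrum (MvPolynomial σ F)) :=
      ⟨2, ![⟨⊥, Ideal.bot_prime⟩,
            ⟨Ideal.span {(X i : MvPolynomial σ F)}, spanSingle_isPrime F i⟩,
            ⟨Ideal.span {(X i : MvPolynomial σ F), X j}, spanPair_isPrime F⟩], by
        intro m
        fin_cases m
        · exact hbot_lt
        · exact hmid_lt⟩
    have := Order.length_le_height_last (p := c)
    exact this

end Height

section Lattice

open MvPolynomial

open Classical in
/-- The index of the variable of `uMon F r` corresponding to the join-irreducible `p`. -/
noncomputable def gIdx {L : Type*} [Preorder L] (r : L) (p : {p : L // JoinIrred p}) :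
    {p : L // JoinIrred p} ⊕ {p : L // JoinIrred p} :=
  if (p : L) ≤ r then Sum.inl p else Sum.inr p

open Classical in
lemma uMon_eq_prod {L : Type*} [Preorder L] [Fintype L] (F : Type*) [Field F] (r : L) :
    uMon F r = ∏ p : {p : L // JoinIrred p}, X (gIdx r p) := by
  classical
  unfold uMon gIdx
  apply Finset.prod_congr rfl
  intro p _
  by_cases h : (p : L) ≤ r <;> simp [h]

lemma bot_not_joinIrred {L : Type*} [Preorder L] [OrderBot L] : ¬ JoinIrred (⊥ : L) := by
  intro h
  apply h
  have : {q : L | q < ⊥} = ∅ := by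
    ext q
    simp [not_lt_bot]
  rw [this]
  exact isLUB_empty

lemma JI_not_le_bot {L : Type*} [PartialOrder L] [OrderBot L]
    (t : {p : L // JoinIrred p}) : ¬((t : L) ≤ ⊥) := by
  intro h
  have : (t : L) = ⊥ := le_bot_iff.mp h
  exact bot_not_joinIrred (this ▸ t.2)

open Classical in
lemma uMon_mem_pair {L : Type*} [Fintype L] [Lattice L] [BoundedOrder L]
    (F : Type*) [Field F] {p q : {p : L // JoinIrred p}} (hpq : (p : L) ≤ (q : L)) (r : L) :
    uMon F r ∈ Ideal.span {(X (Sum.inl p) : MvPolynomial ({p : L // JoinIrred p} ⊕ {p : L // JoinIrred p}) F), X (Sum.inr q)} := by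
  rw [uMon_eq_prod]
  by_cases h : (p : L) ≤ r
  · rw [← Finset.mul_prod_erase Finset.univ _ (Finset.mem_univ p)]
    have hg : gIdx r p = Sum.inl p := by unfold gIdx; rw [if_pos h]
    rw [hg]
    exact Ideal.mul_mem_right _ _ (Ideal.subset_span (by simp))
  · have hq : ¬((q : L) ≤ r) := fun hqr => h (le_trans hpq hqr)
    rw [← Finset.mul_prod_erase Finset.univ _ (Finset.mem_univ q)]
    have hg : gIdx r q = Sum.inr q := by unfold gIdx; rw [if_neg hq]
    rw [hg]
    exact Ideal.mul_mem_right _ _ (Ideal.subset_span (by simp))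

end Lattice


/-- Proposition 1.7(i): for a finite lattice `L` with poset `P` of join-irreducible
elements, a prime `Q` of `S` is a minimal prime of `H_L` of height `2` if and only if
`Q = (x_p, y_q)` for some `p, q ∈ P` with `p ≤ q`.  The height of a prime is its height
as an element of the prime spectrum. -/
theorem stmt5 {L : Type*} [Fintype L] [Lattice L] [BoundedOrder L]
    (F : Type*) [Field F]
    (Q : PrimeSpectrum (MvPolynomial ({p : L // JoinIrred p} ⊕ {p : L // JoinIrred p}) F)) :
    (Q.asIdeal ∈ (Ideal.span (Set.range (fun q : L => uMon F q))).minimalPrimes ∧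
        Order.height Q = 2) ↔
      ∃ p q : {p : L // JoinIrred p}, (p : L) ≤ (q : L) ∧
        Q.asIdeal = Ideal.span {X (Sum.inl p), X (Sum.inr q)} := by
  classical
  constructor
  · rintro ⟨hmin, hht⟩
    have hmin' : Minimal (fun q' => q'.IsPrime ∧
        Ideal.span (Set.range (fun q : L => uMon F q)) ≤ q') Q.asIdeal := hmin
    obtain ⟨⟨hQprime, hQle⟩, hQmin⟩ := hmin'
    have hu : ∀ r : L, uMon F r ∈ Q.asIdeal := fun r =>
      hQle (Ideal.subset_span ⟨r, rfl⟩)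
    have hex : ∀ r : L, ∃ t, X (gIdx r t) ∈ Q.asIdeal := by
      intro r
      have hur := hu r
      rw [uMon_eq_prod] at hur
      obtain ⟨t, -, ht⟩ := (Ideal.IsPrime.prod_mem_iff (hp := hQprime)).mp hur
      exact ⟨t, ht⟩
    choose c hc using hex
    set T : Set ({p : L // JoinIrred p} ⊕ {p : L // JoinIrred p}) :=
      Set.range (fun r : L => gIdx r (c r)) with hT
    have hTQ : Ideal.span (X '' T) ≤ Q.asIdeal := by
      rw [Ideal.span_le]
      rintro _ ⟨k, ⟨r, rfl⟩, rfl⟩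
      exact hc r
    have hHT : Ideal.span (Set.range fun q : L => uMon F q) ≤ Ideal.span (X '' T) := by
      rw [Ideal.span_le]
      rintro _ ⟨r, rfl⟩
      refine SetLike.mem_coe.mpr ?_
      show uMon F r ∈ Ideal.span (X '' T)
      rw [uMon_eq_prod]
      rw [← Finset.mul_prod_erase Finset.univ _ (Finset.mem_univ (c r))]
      exact Ideal.mul_mem_right _ _ (Ideal.subset_span ⟨gIdx r (c r), ⟨r, rfl⟩, rfl⟩)
    have hQT : Q.asIdeal = Ideal.span (X '' T) :=
      le_antisymm (hQmin ⟨spanX_isPrime F T, hHT⟩ hTQ) hTQ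
    have hgTop : gIdx (⊤ : L) (c ⊤) = Sum.inl (c ⊤) := by
      unfold gIdx; rw [if_pos le_top]
    have hgBot : gIdx (⊥ : L) (c ⊥) = Sum.inr (c ⊥) := by
      unfold gIdx; rw [if_neg (JI_not_le_bot (c ⊥))]
    have hi0 : Sum.inl (c ⊤) ∈ T := ⟨⊤, hgTop⟩
    have hj0 : Sum.inr (c ⊥) ∈ T := ⟨⊥, hgBot⟩
    -- T is contained in the pair, using that the height is 2
    have hTsub : T ⊆ {Sum.inl (c ⊤), Sum.inr (c ⊥)} := by
      intro k hk
      by_contra hknot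
      set s1 : Set ({p : L // JoinIrred p} ⊕ {p : L // JoinIrred p}) := {Sum.inl (c ⊤)} with hs1
      set s2 : Set ({p : L // JoinIrred p} ⊕ {p : L // JoinIrred p}) :=
        {Sum.inl (c ⊤), Sum.inr (c ⊥)} with hs2
      set s3 : Set ({p : L // JoinIrred p} ⊕ {p : L // JoinIrred p}) :=
        insert k {Sum.inl (c ⊤), Sum.inr (c ⊥)} with hs3
      have l01 : (⟨⊥, Ideal.bot_prime⟩ :
          PrimeSpectrum (MvPolynomial ({p : L // JoinIrred p} ⊕ {p : L // JoinIrred p}) F)) <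
          ⟨Ideal.span (X '' s1), spanX_isPrime F s1⟩ := by
        rw [← PrimeSpectrum.asIdeal_lt_asIdeal]
        refine lt_of_le_of_ne bot_le ?_
        intro h
        have h' : (⊥ : Ideal (MvPolynomial ({p : L // JoinIrred p} ⊕ {p : L // JoinIrred p}) F))
            = Ideal.span (X '' s1) := h
        have : X (Sum.inl (c ⊤)) ∈ (⊥ : Ideal (MvPolynomial ({p : L // JoinIrred p} ⊕ {p : L // JoinIrred p}) F)) := by
          rw [h']
          exact (X_mem_spanX F).mpr rfl
        rw [Ideal.mem_bot] at this
        exact MvPolynomial.X_ne_zero _ this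
      have l12 : (⟨Ideal.span (X '' s1), spanX_isPrime F s1⟩ :
          PrimeSpectrum (MvPolynomial ({p : L // JoinIrred p} ⊕ {p : L // JoinIrred p}) F)) <
          ⟨Ideal.span (X '' s2), spanX_isPrime F s2⟩ := by
        rw [← PrimeSpectrum.asIdeal_lt_asIdeal]
        refine lt_of_le_of_ne (Ideal.span_mono (Set.image_mono (by simp [hs1, hs2]))) ?_
        intro h
        have h' : Ideal.span (X '' s1) = Ideal.span (X '' s2) := h
        have : (X (Sum.inr (c ⊥)) : MvPolynomial ({p : L // JoinIrred p} ⊕ {p : L // JoinIrred p}) F) ∈ Ideal.span (X '' s1) := by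
          rw [h']
          exact (X_mem_spanX F).mpr (by simp [hs2])
        rw [X_mem_spanX] at this
        simp [hs1] at this
      have l23 : (⟨Ideal.span (X '' s2), spanX_isPrime F s2⟩ :
          PrimeSpectrum (MvPolynomial ({p : L // JoinIrred p} ⊕ {p : L // JoinIrred p}) F)) <
          ⟨Ideal.span (X '' s3), spanX_isPrime F s3⟩ := by
        rw [← PrimeSpectrum.asIdeal_lt_asIdeal]
        refine lt_of_le_of_ne (Ideal.span_mono (Set.image_mono (by simp [hs2, hs3, Set.subset_insert]))) ?_
        intro h
        have h' : Ideal.span (X '' s2) = Ideal.span (X '' s3) := h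
        have : (X k : MvPolynomial ({p : L // JoinIrred p} ⊕ {p : L // JoinIrred p}) F) ∈ Ideal.span (X '' s2) := by
          rw [h']
          exact (X_mem_spanX F).mpr (by simp [hs3])
        rw [X_mem_spanX] at this
        exact hknot this
      have hlastle : (⟨Ideal.span (X '' s3), spanX_isPrime F s3⟩ :
          PrimeSpectrum (MvPolynomial ({p : L // JoinIrred p} ⊕ {p : L // JoinIrred p}) F)) ≤ Q := by
        rw [← PrimeSpectrum.asIdeal_le_asIdeal]
        show Ideal.span (X '' s3) ≤ Q.asIdeal
        refine le_trans (Ideal.span_mono (Set.image_mono ?_)) hTQ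
        rw [hs3]
        intro x hx
        rcases hx with rfl | hx
        · exact hk
        · rcases hx with rfl | rfl
          · exact hi0
          · exact hj0
      let ch : LTSeries (PrimeSpectrum (MvPolynomial ({p : L // JoinIrred p} ⊕ {p : L // JoinIrred p}) F)) :=
        ⟨3, ![⟨⊥, Ideal.bot_prime⟩,
              ⟨Ideal.span (X '' s1), spanX_isPrime F s1⟩,
              ⟨Ideal.span (X '' s2), spanX_isPrime F s2⟩,
              ⟨Ideal.span (X '' s3), spanX_isPrime F s3⟩], by
          intro m
          fin_cases m
          · exact l01
          · exact l12
          · exact l23⟩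
      have hh := Order.length_le_height (p := ch) (x := Q) hlastle
      rw [hht] at hh
      have hh3 : ((3 : ℕ) : ℕ∞) ≤ 2 := hh
      exact absurd hh3 (by decide)
    -- conclude
    refine ⟨c ⊤, c ⊥, ?_, ?_⟩
    · have hval : gIdx ((c ⊥ : L)) (c ((c ⊥ : L))) ∈ T := ⟨(c ⊥ : L), rfl⟩
      have hval' := hTsub hval
      simp only [Set.mem_insert_iff, Set.mem_singleton_iff] at hval'
      unfold gIdx at hval'
      by_cases h : ((c ((c ⊥ : L)) : L)) ≤ ((c ⊥ : L))
      · rw [if_pos h] at hval'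
        rcases hval' with heq | heq
        · rw [Sum.inl.injEq] at heq
          rw [← heq]
          exact h
        · exact absurd heq (by simp)
      · rw [if_neg h] at hval'
        rcases hval' with heq | heq
        · exact absurd heq (by simp)
        · rw [Sum.inr.injEq] at heq
          rw [heq] at h
          exact absurd le_rfl h
    · have hTeq : T = {Sum.inl (c ⊤), Sum.inr (c ⊥)} := by
        apply subset_antisymm hTsub
        intro x hx
        rcases hx with rfl | hx
        · exact hi0
        · rcases hx with rfl
          exact hj0
      rw [hQT, hTeq, Set.image_pair]
  · rintro ⟨p, q, hpq, hQeq⟩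
    have hij : (Sum.inl p : {p : L // JoinIrred p} ⊕ {p : L // JoinIrred p}) ≠ Sum.inr q := by
      simp
    refine ⟨⟨⟨Q.2, ?_⟩, ?_⟩, ?_⟩
    · rw [Ideal.span_le]
      rintro _ ⟨r, rfl⟩
      rw [hQeq]
      exact uMon_mem_pair F hpq r
    · -- minimality
      intro y hy hle
      rw [hQeq, Ideal.span_le]
      have hyQ : y ≤ Ideal.span {(X (Sum.inl p) : MvPolynomial ({p : L // JoinIrred p} ⊕ {p : L // JoinIrred p}) F), X (Sum.inr q)} := hQeq ▸ hle
      have hpair : ({(X (Sum.inl p) : MvPolynomial ({p : L // JoinIrred p} ⊕ {p : L // JoinIrred p}) F), X (Sum.inr q)} : Set (MvPolynomial ({p : L // JoinIrred p} ⊕ {p : L // JoinIrred p}) F))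
          = X '' {Sum.inl p, Sum.inr q} := by rw [Set.image_pair]
      -- from u ⊥ : X (inr q) ∈ y
      have hybot : uMon F (⊥ : L) ∈ y := hy.2 (Ideal.subset_span ⟨⊥, rfl⟩)
      rw [uMon_eq_prod] at hybot
      obtain ⟨t, -, ht⟩ := (Ideal.IsPrime.prod_mem_iff (hp := hy.1)).mp hybot
      have htQ : X (gIdx (⊥ : L) t) ∈ Ideal.span {(X (Sum.inl p) : MvPolynomial ({p : L // JoinIrred p} ⊕ {p : L // JoinIrred p}) F), X (Sum.inr q)} := hyQ ht
      rw [hpair, X_mem_spanX] at htQ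
      simp only [Set.mem_insert_iff, Set.mem_singleton_iff] at htQ
      have hgt : gIdx (⊥ : L) t = Sum.inr t := by
        unfold gIdx; rw [if_neg (JI_not_le_bot t)]
      rw [hgt] at htQ
      have htq : t = q := by
        rcases htQ with heq | heq
        · exact absurd heq (by simp)
        · rwa [Sum.inr.injEq] at heq
      rw [hgt, htq] at ht
      -- from u q : X (inl p) ∈ y
      have hyq : uMon F ((q : L)) ∈ y := hy.2 (Ideal.subset_span ⟨(q : L), rfl⟩)
      rw [uMon_eq_prod] at hyq
      obtain ⟨t', -, ht'⟩ := (Ideal.IsPrime.prod_mem_iff (hp := hy.1)).mp hyq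
      have ht'Q : X (gIdx ((q : L)) t') ∈ Ideal.span {(X (Sum.inl p) : MvPolynomial ({p : L // JoinIrred p} ⊕ {p : L // JoinIrred p}) F), X (Sum.inr q)} := hyQ ht'
      rw [hpair, X_mem_spanX] at ht'Q
      simp only [Set.mem_insert_iff, Set.mem_singleton_iff] at ht'Q
      have hXinlp : (X (Sum.inl p) : MvPolynomial ({p : L // JoinIrred p} ⊕ {p : L // JoinIrred p}) F) ∈ y := by
        by_cases h : ((t' : L)) ≤ ((q : L))
        · have hgt' : gIdx ((q : L)) t' = Sum.inl t' := by
            unfold gIdx; rw [if_pos h]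
          rw [hgt'] at ht'Q
          have : t' = p := by
            rcases ht'Q with heq | heq
            · rwa [Sum.inl.injEq] at heq
            · exact absurd heq (by simp)
          rw [hgt', this] at ht'
          exact ht'
        · have hgt' : gIdx ((q : L)) t' = Sum.inr t' := by
            unfold gIdx; rw [if_neg h]
          rw [hgt'] at ht'Q
          have : t' = q := by
            rcases ht'Q with heq | heq
            · exact absurd heq (by simp)
            · rwa [Sum.inr.injEq] at heq
          rw [this] at h
          exact absurd le_rfl h
      rintro x hx
      rcases hx with rfl | rfl
      · exact hXinlp
      · exact ht
    · -- height
      have hQ' : Q = ⟨Ideal.span {(X (Sum.inl p) : MvPolynomial ({p : L // JoinIrred p} ⊕ {p : L // JoinIrred p}) F), X (Sum.inr q)}, spanPair_isPrime F⟩ :=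
        PrimeSpectrum.ext hQeq
      rw [hQ']
      exact height_spanPair F hij
end
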